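/- arXiv:1011.2465 — 5 statements merged into one kernel-verified Lean document; each statement's English description precedes it below -/
import Mathlib

section
/- Let s ≥ 1 and ℓ ≥ 1 be integers and let H be an s×s matrix with entries in {0,1} that is irreducible. Let A be the (s+ℓ)×(s+ℓ) extended matrix built from H. Then A is irreducible, i.e. for every pair of indices (i,j) with 1 ≤ i,j ≤ s+ℓ there exists m ≥ 1 such that (A^m)_{ij} > 0. -/
/-- A nonnegative square matrix `M` is irreducible if for every pair of indices `(i, j)`
there exists `m ≥ 1` such that `(M ^ m) i j > 0`. -/
def MatrixIrreducible {n : Type*} [Fintype n] [DecidableEq n] (M : Matrix n n ℝ) : Prop :=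
  ∀ i j, ∃ m : ℕ, 1 ≤ m ∧ 0 < (M ^ m) i j

/-- The `(s + ℓ) × (s + ℓ)` extended matrix built from an `s × s` matrix `H`
(0-based translation of the 1-based description): `A i j = H i j` for `i, j < s`;
`A 0 s = 1`; `A (s + ℓ - 1) (s - 1) = 1`; `A i (i + 1) = 1` for `s ≤ i ≤ s + ℓ - 2`;
and `A i j = 0` otherwise. -/
def extMatrix (s ℓ : ℕ) (H : Matrix (Fin s) (Fin s) ℝ) :
    Matrix (Fin (s + ℓ)) (Fin (s + ℓ)) ℝ := fun i j =>
  if hi : (i : ℕ) < s then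
    if hj : (j : ℕ) < s then H ⟨i, hi⟩ ⟨j, hj⟩
    else if (i : ℕ) = 0 ∧ (j : ℕ) = s then 1 else 0
  else
    if (i : ℕ) = s + ℓ - 1 ∧ (j : ℕ) = s - 1 then 1
    else if (j : ℕ) = (i : ℕ) + 1 then 1 else 0

lemma pow_entry_nonneg {n : Type*} [Fintype n] [DecidableEq n] {M : Matrix n n ℝ}
    (hM : ∀ i j, 0 ≤ M i j) : ∀ m i j, 0 ≤ (M ^ m) i j := by
  intro m
  induction m with
  | zero =>
      intro i j
      simp only [pow_zero, Matrix.one_apply]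
      split <;> norm_num
  | succ m ih =>
      intro i j
      rw [pow_succ, Matrix.mul_apply]
      exact Finset.sum_nonneg fun k _ => mul_nonneg (ih i k) (hM k j)

lemma pow_add_entry_pos {n : Type*} [Fintype n] [DecidableEq n] {M : Matrix n n ℝ}
    (hM : ∀ i j, 0 ≤ M i j) {a b : ℕ} {i k j : n}
    (h1 : 0 < (M ^ a) i k) (h2 : 0 < (M ^ b) k j) : 0 < (M ^ (a + b)) i j := by
  rw [pow_add, Matrix.mul_apply]
  exact Finset.sum_pos'
    (fun x _ => mul_nonneg (pow_entry_nonneg hM a i x) (pow_entry_nonneg hM b x j))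
    ⟨k, Finset.mem_univ k, mul_pos h1 h2⟩

lemma extMatrix_block (s ℓ : ℕ) (H : Matrix (Fin s) (Fin s) ℝ) (i j : Fin s) :
    extMatrix s ℓ H (Fin.castLE (Nat.le_add_right s ℓ) i)
      (Fin.castLE (Nat.le_add_right s ℓ) j) = H i j := by
  simp [extMatrix]

lemma extMatrix_nonneg (s ℓ : ℕ) (H : Matrix (Fin s) (Fin s) ℝ)
    (h01 : ∀ i j, H i j = 0 ∨ H i j = 1) (i j : Fin (s + ℓ)) :
    0 ≤ extMatrix s ℓ H i j := by
  unfold extMatrix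
  split
  · split
    · rcases h01 _ _ with h | h <;> rw [h] <;> norm_num
    · split <;> norm_num
  · split
    · norm_num
    · split <;> norm_num

lemma extMatrix_block_pow (s ℓ : ℕ) (H : Matrix (Fin s) (Fin s) ℝ)
    (h01 : ∀ i j, H i j = 0 ∨ H i j = 1) :
    ∀ (m : ℕ) (i j : Fin s), (H ^ m) i j ≤
      (extMatrix s ℓ H ^ m) (Fin.castLE (Nat.le_add_right s ℓ) i)
        (Fin.castLE (Nat.le_add_right s ℓ) j) := by
  have hA := extMatrix_nonneg s ℓ H h01
  have hApow := pow_entry_nonneg hA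
  have hH : ∀ i j, 0 ≤ H i j := fun i j => by
    rcases h01 i j with h | h <;> rw [h] <;> norm_num
  intro m
  induction m with
  | zero =>
      intro i j
      simp [Matrix.one_apply, Fin.castLE_inj]
  | succ m ih =>
      intro i j
      rw [pow_succ, Matrix.mul_apply, pow_succ, Matrix.mul_apply]
      set e := Fin.castLE (Nat.le_add_right s ℓ)
      calc ∑ k : Fin s, (H ^ m) i k * H k j
          ≤ ∑ k : Fin s, (extMatrix s ℓ H ^ m) (e i) (e k) * extMatrix s ℓ H (e k) (e j) := by
            apply Finset.sum_le_sum
            intro k _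
            rw [extMatrix_block]
            exact mul_le_mul_of_nonneg_right (ih i k) (hH k j)
        _ = ∑ x ∈ Finset.univ.map ⟨e, Fin.castLE_injective _⟩,
              (extMatrix s ℓ H ^ m) (e i) x * extMatrix s ℓ H x (e j) := by
            rw [Finset.sum_map]
            rfl
        _ ≤ ∑ x : Fin (s + ℓ), (extMatrix s ℓ H ^ m) (e i) x * extMatrix s ℓ H x (e j) := by
            apply Finset.sum_le_sum_of_subset_of_nonneg (Finset.subset_univ _)
            intro x _ _
            exact mul_nonneg (hApow m _ _) (hA _ _)

lemma extMatrix_entry_zero_s (s ℓ : ℕ) (hs : 1 ≤ s) (H : Matrix (Fin s) (Fin s) ℝ)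
    {i j : Fin (s + ℓ)} (hi : (i : ℕ) = 0) (hj : (j : ℕ) = s) :
    extMatrix s ℓ H i j = 1 := by
  unfold extMatrix
  rw [dif_pos (by omega), dif_neg (by omega), if_pos ⟨hi, hj⟩]

lemma extMatrix_entry_step (s ℓ : ℕ) (H : Matrix (Fin s) (Fin s) ℝ)
    {i j : Fin (s + ℓ)} (hi : s ≤ (i : ℕ)) (hi2 : (i : ℕ) < s + ℓ - 1)
    (hj : (j : ℕ) = (i : ℕ) + 1) :
    extMatrix s ℓ H i j = 1 := by
  unfold extMatrix
  rw [dif_neg (by omega), if_neg (by omega), if_pos hj]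

lemma extMatrix_entry_last (s ℓ : ℕ) (H : Matrix (Fin s) (Fin s) ℝ)
    {i j : Fin (s + ℓ)} (hi : (i : ℕ) = s + ℓ - 1) (hi' : s ≤ (i : ℕ))
    (hj : (j : ℕ) = s - 1) :
    extMatrix s ℓ H i j = 1 := by
  unfold extMatrix
  rw [dif_neg (by omega), if_pos ⟨hi, hj⟩]

lemma extMatrix_chain_from_zero (s ℓ : ℕ) (hs : 1 ≤ s) (H : Matrix (Fin s) (Fin s) ℝ)
    (h01 : ∀ i j, H i j = 0 ∨ H i j = 1) :
    ∀ (t : ℕ) (i j : Fin (s + ℓ)), (i : ℕ) = 0 → (j : ℕ) = s + t →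
      0 < (extMatrix s ℓ H ^ (t + 1)) i j := by
  have hA := extMatrix_nonneg s ℓ H h01
  intro t
  induction t with
  | zero =>
      intro i j hi hj
      rw [pow_one, extMatrix_entry_zero_s s ℓ hs H hi (by omega)]
      norm_num
  | succ t ih =>
      intro i j hi hj
      have hjlt : s + t + 1 < s + ℓ := by omega
      set j' : Fin (s + ℓ) := ⟨s + t, by omega⟩ with hj'
      have h1 : 0 < (extMatrix s ℓ H ^ (t + 1)) i j' := ih i j' hi rfl
      have h2 : 0 < (extMatrix s ℓ H ^ 1) j' j := by
        rw [pow_one, extMatrix_entry_step s ℓ H (by simp [hj']) (by simp [hj']; omega)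
          (by simp [hj']; omega)]
        norm_num
      exact pow_add_entry_pos hA h1 h2

lemma extMatrix_chain_to_last (s ℓ : ℕ) (H : Matrix (Fin s) (Fin s) ℝ)
    (h01 : ∀ i j, H i j = 0 ∨ H i j = 1) :
    ∀ (t : ℕ) (i j : Fin (s + ℓ)), s ≤ (i : ℕ) → (i : ℕ) + t = s + ℓ - 1 →
      (j : ℕ) = s - 1 → 0 < (extMatrix s ℓ H ^ (t + 1)) i j := by
  have hA := extMatrix_nonneg s ℓ H h01
  intro t
  induction t with
  | zero =>
      intro i j hi hit hj
      rw [pow_one, extMatrix_entry_last s ℓ H (by omega) hi hj]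
      norm_num
  | succ t ih =>
      intro i j hi hit hj
      set i' : Fin (s + ℓ) := ⟨(i : ℕ) + 1, by omega⟩ with hi'
      have h1 : 0 < (extMatrix s ℓ H ^ 1) i i' := by
        rw [pow_one, extMatrix_entry_step s ℓ H hi (by omega) (by simp [hi'])]
        norm_num
      have h2 : 0 < (extMatrix s ℓ H ^ (t + 1)) i' j :=
        ih i' j (by simp [hi']; omega) (by simp [hi']; omega) hj
      have h := pow_add_entry_pos hA h1 h2
      rw [show 1 + (t + 1) = t + 1 + 1 by omega] at h
      exact h

/-- If `H` is an irreducible `s × s` matrix with entries in `{0, 1}` (`s, ℓ ≥ 1`), then the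
extended `(s + ℓ) × (s + ℓ)` matrix `A` built from `H` is irreducible: for every pair of
indices `(i, j)` there exists `m ≥ 1` with `(A ^ m) i j > 0`. -/
theorem extMatrix_irreducible (s ℓ : ℕ) (hs : 1 ≤ s) (hℓ : 1 ≤ ℓ)
    (H : Matrix (Fin s) (Fin s) ℝ) (h01 : ∀ i j, H i j = 0 ∨ H i j = 1)
    (hirr : MatrixIrreducible H) :
    MatrixIrreducible (extMatrix s ℓ H) := by
  have hA := extMatrix_nonneg s ℓ H h01
  -- positivity within the block
  have hblk : ∀ (i j : Fin (s + ℓ)) (hi : (i : ℕ) < s) (hj : (j : ℕ) < s),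
      ∃ m : ℕ, 1 ≤ m ∧ 0 < (extMatrix s ℓ H ^ m) i j := by
    intro i j hi hj
    obtain ⟨m, hm, hpos⟩ := hirr ⟨i, hi⟩ ⟨j, hj⟩
    refine ⟨m, hm, lt_of_lt_of_le hpos ?_⟩
    have h := extMatrix_block_pow s ℓ H h01 m ⟨i, hi⟩ ⟨j, hj⟩
    have e1 : Fin.castLE (Nat.le_add_right s ℓ) (⟨i, hi⟩ : Fin s) = i := by
      apply Fin.ext; rfl
    have e2 : Fin.castLE (Nat.le_add_right s ℓ) (⟨j, hj⟩ : Fin s) = j := by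
      apply Fin.ext; rfl
    rwa [e1, e2] at h
  intro i j
  by_cases hi : (i : ℕ) < s
  · by_cases hj : (j : ℕ) < s
    · exact hblk i j hi hj
    · -- i in block, j in tail: go i → 0 → s → ... → j
      push_neg at hj
      set z0 : Fin (s + ℓ) := ⟨0, by omega⟩ with hz0
      obtain ⟨m, hm, h1⟩ := hblk i z0 hi (by simp [hz0]; omega)
      have h2 : 0 < (extMatrix s ℓ H ^ ((j : ℕ) - s + 1)) z0 j :=
        extMatrix_chain_from_zero s ℓ hs H h01 ((j : ℕ) - s) z0 j rfl (by omega)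
      exact ⟨m + ((j : ℕ) - s + 1), by omega, pow_add_entry_pos hA h1 h2⟩
  · push_neg at hi
    set z1 : Fin (s + ℓ) := ⟨s - 1, by omega⟩ with hz1
    have h1 : 0 < (extMatrix s ℓ H ^ (s + ℓ - 1 - (i : ℕ) + 1)) i z1 :=
      extMatrix_chain_to_last s ℓ H h01 (s + ℓ - 1 - (i : ℕ)) i z1 hi (by omega) rfl
    by_cases hj : (j : ℕ) < s
    · -- tail → s-1 → j
      obtain ⟨m, hm, h2⟩ := hblk z1 j (by simp [hz1]; omega) hj
      exact ⟨s + ℓ - 1 - (i : ℕ) + 1 + m, by omega, pow_add_entry_pos hA h1 h2⟩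
    · -- tail → s-1 → 0 → j
      push_neg at hj
      set z0 : Fin (s + ℓ) := ⟨0, by omega⟩ with hz0
      obtain ⟨m, hm, h2⟩ := hblk z1 z0 (by simp [hz1]; omega) (by simp [hz0]; omega)
      have h3 : 0 < (extMatrix s ℓ H ^ ((j : ℕ) - s + 1)) z0 j :=
        extMatrix_chain_from_zero s ℓ hs H h01 ((j : ℕ) - s) z0 j rfl (by omega)
      refine ⟨s + ℓ - 1 - (i : ℕ) + 1 + m + ((j : ℕ) - s + 1), by omega, ?_⟩
      exact pow_add_entry_pos hA (pow_add_entry_pos hA h1 h2) h3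
end

section
/- Every nonnegative real s×s matrix A has a nonzero nonnegative eigenvector U (all entries ≥ 0) with AU = λU, where the eigenvalue λ ≥ 0 is equal to the spectral radius ρ(A) of A. -/
set_option maxHeartbeats 2000000

open Polynomial

noncomputable def specRad {n : Type*} [Fintype n] [DecidableEq n] (M : Matrix n n ℝ) : ℝ :=
  sSup {r : ℝ | ∃ μ : ℂ, (Matrix.charpoly (M.map (fun x : ℝ => (x : ℂ)))).IsRoot μ ∧
    r = ‖μ‖}

section PF

variable {s : ℕ} (A : Matrix (Fin s) (Fin s) ℝ)

local notation "Ac" => Matrix.map A (fun x : ℝ => (x : ℂ))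

lemma pf_Ac_eq : Ac = (Complex.ofRealHom.mapMatrix A) := rfl

lemma pf_charpoly_map : (Matrix.charpoly Ac) = A.charpoly.map Complex.ofRealHom :=
  Matrix.charpoly_map A Complex.ofRealHom

lemma pf_cp_ne : (Matrix.charpoly Ac) ≠ 0 := (Matrix.charpoly_monic _).ne_zero

lemma pf_root_finite : {μ : ℂ | (Matrix.charpoly Ac).IsRoot μ}.Finite :=
  Polynomial.finite_setOf_isRoot (pf_cp_ne A)

lemma pf_root_nonempty (hs : 1 ≤ s) : ∃ μ : ℂ, (Matrix.charpoly Ac).IsRoot μ := by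
  apply Complex.exists_root
  have h1 : (Matrix.charpoly Ac).natDegree = s := by
    simpa using Matrix.charpoly_natDegree_eq_dim Ac
  have := Polynomial.degree_eq_natDegree (pf_cp_ne A)
  rw [this, h1]
  exact_mod_cast hs

lemma pf_specRad_spec (hs : 1 ≤ s) :
    (∃ μ : ℂ, (Matrix.charpoly Ac).IsRoot μ ∧ ‖μ‖ = specRad A) ∧
    (∀ μ : ℂ, (Matrix.charpoly Ac).IsRoot μ → ‖μ‖ ≤ specRad A) := by
  set S := {r : ℝ | ∃ μ : ℂ, (Matrix.charpoly Ac).IsRoot μ ∧ r = ‖μ‖} with hS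
  have hSim : S = (‖·‖) '' {μ : ℂ | (Matrix.charpoly Ac).IsRoot μ} := by
    ext r; constructor
    · rintro ⟨μ, h1, h2⟩; exact ⟨μ, h1, h2.symm⟩
    · rintro ⟨μ, h1, h2⟩; exact ⟨μ, h1, h2.symm⟩
  have hfin : S.Finite := by rw [hSim]; exact (pf_root_finite A).image _
  have hne : S.Nonempty := by
    obtain ⟨μ, hμ⟩ := pf_root_nonempty A hs
    exact ⟨‖μ‖, μ, hμ, rfl⟩
  have hmem : sSup S ∈ S := hne.csSup_mem hfin
  constructor
  · obtain ⟨μ, h1, h2⟩ := hmem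
    exact ⟨μ, h1, h2.symm⟩
  · intro μ hμ
    exact le_csSup hfin.bddAbove ⟨μ, hμ, rfl⟩

lemma pf_specRad_nonneg (hs : 1 ≤ s) : 0 ≤ specRad A := by
  obtain ⟨⟨μ, _, h2⟩, _⟩ := pf_specRad_spec A hs
  rw [← h2]; positivity

/-- evaluation of charmatrix -/
lemma pf_eval_charmatrix {R : Type*} [CommRing R] {m : ℕ} (M : Matrix (Fin m) (Fin m) R) (t : R) :
    (Matrix.charmatrix M).map (Polynomial.eval t) = t • (1 : Matrix (Fin m) (Fin m) R) - M := by
  ext i j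
  by_cases h : i = j <;>
    simp [Matrix.charmatrix_apply, Matrix.one_apply, h, Matrix.smul_apply, Matrix.sub_apply,
      Matrix.diagonal_apply]

lemma pf_eval_charpoly {R : Type*} [CommRing R] {m : ℕ} (M : Matrix (Fin m) (Fin m) R) (t : R) :
    M.charpoly.eval t = (t • (1 : Matrix (Fin m) (Fin m) R) - M).det := by
  rw [← pf_eval_charmatrix M t, Matrix.charpoly, Polynomial.eval, ← Polynomial.coe_eval₂RingHom,
    RingHom.map_det]
  rfl



end PF

section PFC
variable {s : ℕ} (A : Matrix (Fin s) (Fin s) ℂ)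
attribute [local instance] Matrix.linftyOpNormedRing Matrix.linftyOpNormedAlgebra
open Filter

lemma pf_exists_bound {ρ' : ℝ} (h0 : 0 ≤ ρ') (hρ : spectralRadius ℂ A ≤ ENNReal.ofReal ρ')
    {t : ℝ} (h : ρ' < t) :
    ∃ C : ℝ, 1 ≤ C ∧ ∀ n : ℕ, ‖A ^ n‖ ≤ C * t ^ n := by
  have htpos : 0 < t := lt_of_le_of_lt h0 h
  have hlt : spectralRadius ℂ A < ENNReal.ofReal t :=
    lt_of_le_of_lt hρ (by exact_mod_cast ENNReal.ofReal_lt_ofReal_iff_of_nonneg h0 |>.mpr h)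
  have hev : ∀ᶠ n : ℕ in atTop, (‖A ^ n‖₊ : ENNReal) ^ (1 / n : ℝ) < ENNReal.ofReal t :=
    (spectrum.pow_nnnorm_pow_one_div_tendsto_nhds_spectralRadius A).eventually_lt_const hlt
  obtain ⟨N, hN⟩ := hev.exists_forall_of_atTop
  have key : ∀ n : ℕ, N ≤ n → 1 ≤ n → ‖A ^ n‖ ≤ t ^ n := by
    intro n hn h1
    have hlt' := hN n hn
    have hnne : (1 / n : ℝ) ≠ 0 := by positivity
    have : ((‖A ^ n‖₊ : ENNReal) ^ (1 / n : ℝ)) ^ (n : ℝ) < (ENNReal.ofReal t) ^ (n : ℝ) := by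
      apply ENNReal.rpow_lt_rpow hlt' (by positivity)
    rw [← ENNReal.rpow_mul, one_div, inv_mul_cancel₀ (by positivity : (n : ℝ) ≠ 0),
      ENNReal.rpow_one, ENNReal.rpow_natCast, ← ENNReal.ofReal_pow htpos.le] at this
    have h2 : ‖A ^ n‖ < t ^ n := by
      rw [← ENNReal.ofReal_coe_nnreal, coe_nnnorm] at this
      exact (ENNReal.ofReal_lt_ofReal_iff (by positivity)).mp this
    exact h2.le
  classical
  set C : ℝ := 1 + ∑ m ∈ Finset.range (N + 1), ‖A ^ m‖ / t ^ m with hC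
  have hC1 : 1 ≤ C := by
    have : 0 ≤ ∑ m ∈ Finset.range (N + 1), ‖A ^ m‖ / t ^ m :=
      Finset.sum_nonneg fun m _ => by positivity
    rw [hC]
    linarith
  refine ⟨C, hC1, fun n => ?_⟩
  rcases lt_or_ge n (N + 1) with hn | hn
  · have hmem : n ∈ Finset.range (N + 1) := Finset.mem_range.mpr hn
    have hle : ‖A ^ n‖ / t ^ n ≤ C := by
      have := Finset.single_le_sum (f := fun m => ‖A ^ m‖ / t ^ m)
        (fun m _ => by positivity) hmem
      linarith
    calc ‖A ^ n‖ = (‖A ^ n‖ / t ^ n) * t ^ n := by field_simp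
    _ ≤ C * t ^ n := by
      apply mul_le_mul_of_nonneg_right hle (by positivity)
  · calc ‖A ^ n‖ ≤ t ^ n := key n (by omega) (by omega)
    _ ≤ C * t ^ n := by nlinarith [pow_pos htpos n]


lemma pf_resolvent {ρ' : ℝ} (h0 : 0 ≤ ρ') (hρ : spectralRadius ℂ A ≤ ENNReal.ofReal ρ')
    {z : ℂ} (hz : ρ' < ‖z‖) :
    ∃ B : Matrix (Fin s) (Fin s) ℂ,
      HasSum (fun n : ℕ => z⁻¹ ^ (n + 1) • A ^ n) B ∧ (z • 1 - A) * B = 1 := by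
  have hzpos : 0 < ‖z‖ := lt_of_le_of_lt h0 hz
  have hzne : z ≠ 0 := by
    intro h; rw [h] at hzpos; simp at hzpos
  set t : ℝ := (ρ' + ‖z‖) / 2 with ht
  have h1 : ρ' < t := by rw [ht]; linarith
  have h2 : t < ‖z‖ := by rw [ht]; linarith
  have htpos : 0 < t := lt_of_le_of_lt h0 h1
  obtain ⟨C, hC1, hC⟩ := pf_exists_bound A h0 hρ h1
  have hCpos : 0 < C := lt_of_lt_of_le one_pos hC1
  -- summability
  have hterm : ∀ n : ℕ, ‖z⁻¹ ^ (n + 1) • A ^ n‖ ≤ (C / ‖z‖) * (t / ‖z‖) ^ n := by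
    intro n
    rw [norm_smul]
    have : ‖z⁻¹ ^ (n + 1)‖ = (‖z‖)⁻¹ ^ (n + 1) := by
      simp [map_pow]
    rw [this]
    calc (‖z‖)⁻¹ ^ (n + 1) * ‖A ^ n‖
        ≤ (‖z‖)⁻¹ ^ (n + 1) * (C * t ^ n) := by
          apply mul_le_mul_of_nonneg_left (hC n) (by positivity)
      _ = (C / ‖z‖) * (t / ‖z‖) ^ n := by
          ring
  have hsum : Summable (fun n : ℕ => z⁻¹ ^ (n + 1) • A ^ n) := by
    apply Summable.of_norm
    apply Summable.of_nonneg_of_le (fun n => norm_nonneg _) hterm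
    apply Summable.mul_left
    apply summable_geometric_of_lt_one (by positivity)
    rw [div_lt_one hzpos]
    exact h2
  obtain ⟨B, hB⟩ := hsum
  refine ⟨B, hB, ?_⟩
  -- telescoping
  set g : ℕ → Matrix (Fin s) (Fin s) ℂ := fun n => z⁻¹ ^ n • A ^ n with hg
  have hkey : ∀ n : ℕ, (z • 1 - A) * (z⁻¹ ^ (n + 1) • A ^ n) = g n - g (n + 1) := by
    intro n
    have hzz : z * z⁻¹ ^ (n + 1) = z⁻¹ ^ n := by
      rw [pow_succ]
      field_simp
    rw [hg, sub_mul, Matrix.smul_mul, one_mul, Matrix.mul_smul, smul_smul, hzz, ← pow_succ']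
  have hmul : HasSum (fun n : ℕ => (z • 1 - A) * (z⁻¹ ^ (n + 1) • A ^ n)) ((z • 1 - A) * B) :=
    hB.mul_left _
  have hg0 : g 0 = 1 := by simp [hg]
  have hgz : Filter.Tendsto g atTop (nhds 0) := by
    have : Filter.Tendsto (fun n : ℕ => ‖g n‖) atTop (nhds 0) := by
      have hb : ∀ n : ℕ, ‖g n‖ ≤ ‖z‖ * ((C / ‖z‖) * (t / ‖z‖) ^ n) := by
        intro n
        have : ‖g n‖ = ‖z‖ * ‖z⁻¹ ^ (n + 1) • A ^ n‖ := by
          rw [hg, norm_smul, norm_smul]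
          simp only [norm_pow, norm_inv]
          rw [pow_succ]
          field_simp
        rw [this]
        exact mul_le_mul_of_nonneg_left (hterm n) hzpos.le
      have hgeo : Filter.Tendsto (fun n : ℕ => ‖z‖ * ((C / ‖z‖) * (t / ‖z‖) ^ n)) atTop (nhds 0) := by
        have := tendsto_pow_atTop_nhds_zero_of_lt_one (by positivity : (0:ℝ) ≤ t / ‖z‖)
          (by rw [div_lt_one hzpos]; exact h2)
        simpa using (this.const_mul (C / ‖z‖)).const_mul (‖z‖)
      exact squeeze_zero (fun n => norm_nonneg _) hb hgeo
    exact tendsto_zero_iff_norm_tendsto_zero.mpr this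
  have hpartial : Filter.Tendsto (fun N : ℕ => ∑ n ∈ Finset.range N, (z • 1 - A) * (z⁻¹ ^ (n + 1) • A ^ n))
      atTop (nhds 1) := by
    have heq : ∀ N : ℕ, ∑ n ∈ Finset.range N, (z • 1 - A) * (z⁻¹ ^ (n + 1) • A ^ n) = g 0 - g N := by
      intro N
      rw [← Finset.sum_range_sub' g N]
      exact Finset.sum_congr rfl fun n _ => hkey n
    simp only [heq, hg0]
    simpa using (tendsto_const_nhds (x := (1 : Matrix (Fin s) (Fin s) ℂ))).sub hgz
  exact tendsto_nhds_unique hmul.tendsto_sum_nat hpartial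



end PFC

section PFR
open Polynomial Filter
variable {s : ℕ} (A : Matrix (Fin s) (Fin s) ℝ)
attribute [local instance] Matrix.linftyOpNormedRing Matrix.linftyOpNormedAlgebra

local notation "Ac" => Matrix.map A (fun x : ℝ => (x : ℂ))

lemma pf_map_pow (n : ℕ) : (Ac) ^ n = (A ^ n).map (fun x : ℝ => (x : ℂ)) := by
  show (Complex.ofRealHom.mapMatrix A) ^ n = Complex.ofRealHom.mapMatrix (A ^ n)
  rw [map_pow]

lemma pf_pow_nonneg (hA : ∀ i j, 0 ≤ A i j) (n : ℕ) : ∀ i j, 0 ≤ (A ^ n) i j := by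
  induction n with
  | zero => intro i j; by_cases h : i = j <;> simp [Matrix.one_apply, h]
  | succ n ih =>
    intro i j
    rw [pow_succ, Matrix.mul_apply]
    exact Finset.sum_nonneg fun m _ => mul_nonneg (ih i m) (hA m j)

lemma pf_specRad_bound (hs : 1 ≤ s) :
    spectralRadius ℂ (Ac) ≤ ENNReal.ofReal (specRad A) := by
  apply iSup₂_le
  intro z hz
  have : Nonempty (Fin s) := Fin.pos_iff_nonempty.mp hs
  rw [spectrum.mem_iff, Matrix.isUnit_iff_isUnit_det, isUnit_iff_ne_zero, not_ne_iff,
    Algebra.algebraMap_eq_smul_one, ← pf_eval_charpoly] at hz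
  have hle : ‖z‖ ≤ specRad A := (pf_specRad_spec A hs).2 z hz
  rw [← ENNReal.ofReal_coe_nnreal, coe_nnnorm]
  exact ENNReal.ofReal_le_ofReal hle

lemma pf_real_not_root {t : ℝ} (hs : 1 ≤ s) (ht : specRad A < t) : A.charpoly.eval t ≠ 0 := by
  intro h
  have hroot : (Matrix.charpoly Ac).IsRoot (t : ℂ) := by
    rw [pf_charpoly_map, IsRoot, eval_map]
    show Polynomial.eval₂ Complex.ofRealHom (Complex.ofRealHom t) A.charpoly = 0
    rw [Polynomial.eval₂_at_apply, h, map_zero]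
  have := (pf_specRad_spec A hs).2 _ hroot
  rw [Complex.norm_real, Real.norm_of_nonneg (le_trans (pf_specRad_nonneg A hs) ht.le)] at this
  linarith

lemma pf_map_smul_one_sub (t : ℝ) :
    ((t : ℂ) • 1 - Ac) = (t • 1 - A).map (fun x : ℝ => (x : ℂ)) := by
  ext i j
  by_cases h : i = j <;>
    simp [Matrix.sub_apply, Matrix.smul_apply, Matrix.one_apply, h]

lemma pf_real_resolvent_nonneg (hs : 1 ≤ s) (hA : ∀ i j, 0 ≤ A i j)
    {t : ℝ} (ht : specRad A < t) :
    (∀ i j, 0 ≤ (t • (1 : Matrix (Fin s) (Fin s) ℝ) - A)⁻¹ i j) ∧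
      IsUnit (t • (1 : Matrix (Fin s) (Fin s) ℝ) - A).det := by
  have hρ0 : 0 ≤ specRad A := pf_specRad_nonneg A hs
  have htpos : 0 < t := lt_of_le_of_lt hρ0 ht
  set M : Matrix (Fin s) (Fin s) ℝ := t • 1 - A with hM
  have hdet : IsUnit M.det := by
    rw [isUnit_iff_ne_zero, hM, ← pf_eval_charpoly]
    exact pf_real_not_root A hs ht
  have habs : specRad A < ‖(t : ℂ)‖ := by
    rwa [Complex.norm_real, Real.norm_of_nonneg htpos.le]
  obtain ⟨B, hB, hB1⟩ := pf_resolvent (Ac) hρ0 (pf_specRad_bound A hs) habs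
  -- identify B with the map of the real inverse
  have hmapinv : (M.map (fun x : ℝ => (x : ℂ))) * (M⁻¹.map (fun x : ℝ => (x : ℂ))) = 1 := by
    have := Matrix.mul_nonsing_inv M hdet
    calc (M.map (fun x : ℝ => (x : ℂ))) * (M⁻¹.map (fun x : ℝ => (x : ℂ)))
        = Complex.ofRealHom.mapMatrix (M * M⁻¹) := by rw [map_mul]; rfl
      _ = 1 := by rw [this, map_one]
  have hBeq : B = M⁻¹.map (fun x : ℝ => (x : ℂ)) := by
    have h1 : ((t : ℂ) • 1 - Ac)⁻¹ = B := Matrix.inv_eq_right_inv hB1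
    have h2 : ((t : ℂ) • 1 - Ac)⁻¹ = M⁻¹.map (fun x : ℝ => (x : ℂ)) := by
      rw [pf_map_smul_one_sub]
      exact Matrix.inv_eq_right_inv hmapinv
    rw [← h1, h2]
  refine ⟨fun i j => ?_, hdet⟩
  -- entrywise sum
  have hentry : HasSum (fun n : ℕ => (((t : ℂ)⁻¹ ^ (n + 1) • (Ac) ^ n) i j)) (B i j) := by
    let L : Matrix (Fin s) (Fin s) ℂ →ₗ[ℂ] ℂ :=
      { toFun := fun N => N i j, map_add' := fun _ _ => rfl, map_smul' := fun _ _ => rfl }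
    exact (LinearMap.toContinuousLinearMap L).hasSum hB
  have hre : HasSum (fun n : ℕ => (((t : ℂ)⁻¹ ^ (n + 1) • (Ac) ^ n) i j).re) ((B i j).re) :=
    Complex.reCLM.hasSum hentry
  have hterm : ∀ n : ℕ, (((t : ℂ)⁻¹ ^ (n + 1) • (Ac) ^ n) i j).re
      = t⁻¹ ^ (n + 1) * (A ^ n) i j := by
    intro n
    rw [pf_map_pow, Matrix.smul_apply, Matrix.map_apply, smul_eq_mul]
    rw [show ((t : ℂ)⁻¹ ^ (n + 1) * (((A ^ n) i j : ℝ) : ℂ))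
        = (((t⁻¹ ^ (n + 1) * (A ^ n) i j : ℝ)) : ℂ) by push_cast; ring]
    exact Complex.ofReal_re _
  have hBre : (B i j).re = M⁻¹ i j := by rw [hBeq]; simp
  rw [← hBre]
  refine hasSum_le (fun n => ?_) hasSum_zero hre
  rw [hterm]
  have := pf_pow_nonneg A hA n i j
  positivity

end PFR

section PFH
open Polynomial Filter

/-- H1: a polynomial nonneg on an open right-neighborhood is nonneg at the point. -/
lemma pf_poly_nonneg_at {q : Polynomial ℝ} {c : ℝ} (h : ∀ t, c < t → 0 ≤ q.eval t) :
    0 ≤ q.eval c := by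
  have hc : Filter.Tendsto (fun t => q.eval t) (nhdsWithin c (Set.Ioi c)) (nhds (q.eval c)) :=
    (q.continuous.tendsto c).mono_left nhdsWithin_le_nhds
  refine ge_of_tendsto hc ?_
  exact eventually_nhdsWithin_of_forall fun t hmem => h t hmem

end PFH

section PFR2
open Polynomial Filter
variable {s : ℕ} (A : Matrix (Fin s) (Fin s) ℝ)
attribute [local instance] Matrix.linftyOpNormedRing Matrix.linftyOpNormedAlgebra

local notation "Ac" => Matrix.map A (fun x : ℝ => (x : ℂ))

lemma pf_charpoly_pos (hs : 1 ≤ s) {t : ℝ} (ht : specRad A < t) : 0 < A.charpoly.eval t := by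
  by_contra hle
  push_neg at hle
  have hne := pf_real_not_root A hs ht
  have hlt : A.charpoly.eval t < 0 := lt_of_le_of_ne hle hne
  have hdeg : 0 < A.charpoly.degree := by
    rw [Polynomial.degree_eq_natDegree (Matrix.charpoly_monic A).ne_zero]
    have : A.charpoly.natDegree = s := by simpa using Matrix.charpoly_natDegree_eq_dim A
    rw [this]
    exact_mod_cast hs
  have htop : Filter.Tendsto (fun x => A.charpoly.eval x) atTop atTop :=
    A.charpoly.tendsto_atTop_of_leadingCoeff_nonneg hdeg
      (by rw [Polynomial.Monic.leadingCoeff (Matrix.charpoly_monic A)]; exact zero_le_one)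
  obtain ⟨x, hx1, hx2⟩ := ((htop.eventually_ge_atTop 1).and (eventually_ge_atTop (t + 1))).exists
  have hcont : ContinuousOn (fun u => A.charpoly.eval u) (Set.Icc t x) :=
    (Polynomial.continuous _).continuousOn
  have hiv : (0 : ℝ) ∈ Set.Icc (A.charpoly.eval t) (A.charpoly.eval x) :=
    ⟨hlt.le, le_trans zero_le_one hx1⟩
  obtain ⟨y, hy1, hy2⟩ := intermediate_value_Icc (by linarith) hcont hiv
  have hy : specRad A < y := lt_of_lt_of_le ht hy1.1
  exact pf_real_not_root A hs hy hy2

lemma pf_adj_eval (t : ℝ) :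
    ((Matrix.charmatrix A).adjugate).map (Polynomial.eval t)
      = (t • (1 : Matrix (Fin s) (Fin s) ℝ) - A).adjugate := by
  have h := (Polynomial.evalRingHom t).map_adjugate (Matrix.charmatrix A)
  have h2 : (Polynomial.evalRingHom t).mapMatrix (Matrix.charmatrix A)
      = t • (1 : Matrix (Fin s) (Fin s) ℝ) - A := by
    rw [RingHom.mapMatrix_apply]
    exact pf_eval_charmatrix A t
  rw [← h2, ← h]
  rfl

lemma pf_adj_entry_nonneg (hs : 1 ≤ s) (hA : ∀ i j, 0 ≤ A i j) {t : ℝ} (ht : specRad A < t) :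
    ∀ i j, 0 ≤ ((Matrix.charmatrix A).adjugate i j).eval t := by
  intro i j
  obtain ⟨hinv, hdet⟩ := pf_real_resolvent_nonneg A hs hA ht
  set M : Matrix (Fin s) (Fin s) ℝ := t • 1 - A with hM
  have hadj : M.adjugate = M.det • M⁻¹ := by
    rw [Matrix.inv_def, smul_smul, Ring.mul_inverse_cancel _ hdet, one_smul]
  have hentry : ((Matrix.charmatrix A).adjugate i j).eval t = M.det * M⁻¹ i j := by
    have := congrFun (congrFun (pf_adj_eval A t) i) j
    rw [Matrix.map_apply] at this
    rw [this, hadj, Matrix.smul_apply, smul_eq_mul]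
  rw [hentry]
  have hdetpos : 0 < M.det := by
    rw [hM, ← pf_eval_charpoly]
    exact pf_charpoly_pos A hs ht
  exact mul_nonneg hdetpos.le (hinv i j)

lemma pf_norm_le_entries {c : ℝ} (M : Matrix (Fin s) (Fin s) ℂ) (hc : 0 ≤ c)
    (h : ∀ i j, ‖M i j‖ ≤ c) : ‖M‖ ≤ s * c := by
  rw [Matrix.linfty_opNorm_def]
  have hc' : (((s : NNReal) * c.toNNReal : NNReal) : ℝ) = s * c := by
    push_cast [Real.coe_toNNReal c hc]
    ring
  rw [← hc']
  apply NNReal.coe_le_coe.mpr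
  apply Finset.sup_le
  intro i _
  calc ∑ j, ‖M i j‖₊ ≤ ∑ _j : Fin s, c.toNNReal := Finset.sum_le_sum fun j _ => by
        rw [← NNReal.coe_le_coe, Real.coe_toNNReal c hc]
        exact h i j
    _ = (Finset.univ.card : NNReal) * c.toNNReal := by rw [Finset.sum_const, nsmul_eq_mul]
    _ = (s : NNReal) * c.toNNReal := by simp

end PFR2

section PFR3
open Polynomial Filter
variable {s : ℕ} (A : Matrix (Fin s) (Fin s) ℝ)
attribute [local instance] Matrix.linftyOpNormedRing Matrix.linftyOpNormedAlgebra

local notation "Ac" => Matrix.map A (fun x : ℝ => (x : ℂ))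

lemma pf_res_entry (hs : 1 ≤ s) {z : ℂ} (hz : specRad A < ‖z‖) :
    ∃ B : Matrix (Fin s) (Fin s) ℂ, ((z • 1 - Ac) * B = 1) ∧
      ∀ i j, HasSum (fun n : ℕ => z⁻¹ ^ (n + 1) * (((A ^ n) i j : ℝ) : ℂ)) (B i j) := by
  obtain ⟨B, hB, hB1⟩ := pf_resolvent (Ac) (pf_specRad_nonneg A hs) (pf_specRad_bound A hs) hz
  refine ⟨B, hB1, fun i j => ?_⟩
  have hentry : HasSum (fun n : ℕ => ((z⁻¹ ^ (n + 1) • (Ac) ^ n) i j)) (B i j) := by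
    let L : Matrix (Fin s) (Fin s) ℂ →ₗ[ℂ] ℂ :=
      { toFun := fun N => N i j, map_add' := fun _ _ => rfl, map_smul' := fun _ _ => rfl }
    exact (LinearMap.toContinuousLinearMap L).hasSum hB
  convert hentry using 2 with n
  rw [pf_map_pow, Matrix.smul_apply, Matrix.map_apply, smul_eq_mul]

lemma pf_real_res_entry (hs : 1 ≤ s) {t : ℝ} (ht : specRad A < t) (i j : Fin s) :
    HasSum (fun n : ℕ => t⁻¹ ^ (n + 1) * (A ^ n) i j)
      ((t • (1 : Matrix (Fin s) (Fin s) ℝ) - A)⁻¹ i j) := by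
  have hρ0 : 0 ≤ specRad A := pf_specRad_nonneg A hs
  have htpos : 0 < t := lt_of_le_of_lt hρ0 ht
  have habs : specRad A < ‖(t : ℂ)‖ := by
    rwa [Complex.norm_real, Real.norm_of_nonneg htpos.le]
  obtain ⟨B, hB1, hBE⟩ := pf_res_entry A hs habs
  set M : Matrix (Fin s) (Fin s) ℝ := t • 1 - A with hM
  have hdet : IsUnit M.det := by
    rw [isUnit_iff_ne_zero, hM, ← pf_eval_charpoly]
    exact pf_real_not_root A hs ht
  have hmapinv : (M.map (fun x : ℝ => (x : ℂ))) * (M⁻¹.map (fun x : ℝ => (x : ℂ))) = 1 := by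
    have h := Matrix.mul_nonsing_inv M hdet
    calc (M.map (fun x : ℝ => (x : ℂ))) * (M⁻¹.map (fun x : ℝ => (x : ℂ)))
        = Complex.ofRealHom.mapMatrix (M * M⁻¹) := by rw [map_mul]; rfl
      _ = 1 := by rw [h, map_one]
  have hBeq : B = M⁻¹.map (fun x : ℝ => (x : ℂ)) := by
    have h1 : ((t : ℂ) • 1 - Ac)⁻¹ = B := Matrix.inv_eq_right_inv hB1
    have h2 : ((t : ℂ) • 1 - Ac)⁻¹ = M⁻¹.map (fun x : ℝ => (x : ℂ)) := by
      rw [pf_map_smul_one_sub]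
      exact Matrix.inv_eq_right_inv hmapinv
    rw [← h1, h2]
  have hre : HasSum (fun n : ℕ => (((t : ℂ)⁻¹ ^ (n + 1) * (((A ^ n) i j : ℝ) : ℂ))).re)
      ((B i j).re) := Complex.reCLM.hasSum (hBE i j)
  have hterm : ∀ n : ℕ, (((t : ℂ)⁻¹ ^ (n + 1) * (((A ^ n) i j : ℝ) : ℂ))).re
      = t⁻¹ ^ (n + 1) * (A ^ n) i j := by
    intro n
    rw [show ((t : ℂ)⁻¹ ^ (n + 1) * (((A ^ n) i j : ℝ) : ℂ))
        = (((t⁻¹ ^ (n + 1) * (A ^ n) i j : ℝ)) : ℂ) by push_cast; ring]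
    exact Complex.ofReal_re _
  have hBre : (B i j).re = M⁻¹ i j := by rw [hBeq]; simp
  rw [← hBre]
  simp only [hterm] at hre
  exact hre

lemma pf_isRoot_specRad (hs : 1 ≤ s) (hA : ∀ i j, 0 ≤ A i j) :
    A.charpoly.eval (specRad A) = 0 := by
  classical
  have hρ0 : 0 ≤ specRad A := pf_specRad_nonneg A hs
  obtain ⟨⟨μ₀, hμroot, hμabs⟩, hub⟩ := pf_specRad_spec A hs
  by_contra hne
  -- specRad is positive, else 0 is already a root
  have hρpos : 0 < specRad A := by
    rcases hρ0.lt_or_eq with h | h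
    · exact h
    · exfalso
      have h0 : μ₀ = 0 := by
        have : ‖μ₀‖ = 0 := by rw [hμabs, ← h]
        exact norm_eq_zero.mp this
      have hc : ((A.charpoly.eval (specRad A) : ℝ) : ℂ) = 0 := by
        have h1 : (Matrix.charpoly Ac).eval μ₀ = 0 := hμroot
        rw [pf_charpoly_map, eval_map, h0] at h1
        have h2 := Polynomial.eval₂_at_apply (p := A.charpoly) Complex.ofRealHom (0 : ℝ)
        rw [map_zero] at h2
        rw [h2] at h1
        rw [← h]
        exact h1
      exact hne (by exact_mod_cast hc)
  -- uniform bound for resolvent entries on the interval (ρ, ρ+1]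
  have hpne : ∀ u ∈ Set.Icc (specRad A) (specRad A + 1), A.charpoly.eval u ≠ 0 := by
    intro u hu
    rcases eq_or_lt_of_le hu.1 with h | h
    · rw [← h]; exact hne
    · exact pf_real_not_root A hs h
  have hbound : ∀ ij : Fin s × Fin s, ∃ Cij : ℝ, ∀ u ∈ Set.Icc (specRad A) (specRad A + 1),
      |((Matrix.charmatrix A).adjugate ij.1 ij.2).eval u / A.charpoly.eval u| ≤ Cij := by
    intro ij
    have hcont : ContinuousOn
        (fun u => ((Matrix.charmatrix A).adjugate ij.1 ij.2).eval u / A.charpoly.eval u)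
        (Set.Icc (specRad A) (specRad A + 1)) :=
      ContinuousOn.div ((Polynomial.continuous _).continuousOn)
        ((Polynomial.continuous _).continuousOn) hpne
    obtain ⟨C, hC⟩ := (isCompact_Icc).exists_bound_of_continuousOn hcont
    exact ⟨C, fun u hu => by have := hC u hu; rwa [Real.norm_eq_abs] at this⟩
  choose Cf hCf using hbound
  set C : ℝ := ∑ ij : Fin s × Fin s, |Cf ij| with hCdef
  have hCc : ∀ ij : Fin s × Fin s, Cf ij ≤ C := by
    intro ij
    rw [hCdef]
    exact le_trans (le_abs_self _)
      (Finset.single_le_sum (f := fun ij : Fin s × Fin s => |Cf ij|)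
        (fun _ _ => abs_nonneg _) (Finset.mem_univ ij))
  have hC0 : 0 ≤ C := Finset.sum_nonneg fun _ _ => abs_nonneg _
  have hinvent : ∀ u : ℝ, specRad A < u → u ≤ specRad A + 1 → ∀ i j,
      |((u • (1 : Matrix (Fin s) (Fin s) ℝ)) - A)⁻¹ i j| ≤ C := by
    intro u hu1 hu2 i j
    have hdet' : A.charpoly.eval u ≠ 0 := pf_real_not_root A hs hu1
    have hform : (u • (1 : Matrix (Fin s) (Fin s) ℝ) - A)⁻¹ i j
        = ((Matrix.charmatrix A).adjugate i j).eval u / A.charpoly.eval u := by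
      rw [Matrix.inv_def, Matrix.smul_apply, smul_eq_mul]
      have hadj := congrFun (congrFun (pf_adj_eval A u) i) j
      rw [Matrix.map_apply] at hadj
      rw [← hadj, ← pf_eval_charpoly, Ring.inverse_eq_inv]
      rw [div_eq_mul_inv, mul_comm]
    rw [hform]
    exact le_trans (hCf (i, j) u ⟨hu1.le, hu2⟩) (hCc (i, j))
  -- choose a point close to the spectral radius
  set D : ℝ := (s : ℝ) * C with hDdef
  have hD0 : 0 ≤ D := by positivity
  set δ : ℝ := min 1 (1 / (D + 1)) with hδdef
  have hδpos : 0 < δ := lt_min one_pos (by positivity)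
  have hδ1 : δ ≤ 1 := min_le_left _ _
  have hδD : δ * D < 1 := by
    have h1 : δ ≤ 1 / (D + 1) := min_le_right _ _
    have : δ * D ≤ (1 / (D + 1)) * D := by
      apply mul_le_mul_of_nonneg_right h1 hD0
    have h2 : (1 / (D + 1)) * D < 1 := by
      rw [div_mul_eq_mul_div, div_lt_one (by linarith)]
      linarith
    linarith
  set u : ℝ := specRad A + δ with hudef
  have hu1 : specRad A < u := by rw [hudef]; linarith
  have hu2 : u ≤ specRad A + 1 := by rw [hudef]; linarith
  have hupos : 0 < u := lt_of_le_of_lt hρ0 hu1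
  set z : ℂ := ((u / specRad A : ℝ) : ℂ) * μ₀ with hzdef
  have habsz : ‖z‖ = u := by
    rw [hzdef, norm_mul, Complex.norm_real, hμabs,
      Real.norm_of_nonneg (by positivity : (0:ℝ) ≤ u / specRad A)]
    field_simp
  have hzρ : specRad A < ‖z‖ := by rw [habsz]; exact hu1
  obtain ⟨B, hB1, hBE⟩ := pf_res_entry A hs hzρ
  -- entry bound for B
  have hBent : ∀ i j, ‖B i j‖ ≤ C := by
    intro i j
    have hsum_u := pf_real_res_entry A hs hu1 i j
    have hfn : (fun n : ℕ => ‖z⁻¹ ^ (n + 1) * (((A ^ n) i j : ℝ) : ℂ)‖)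
        = fun n : ℕ => u⁻¹ ^ (n + 1) * (A ^ n) i j := by
      funext n
      rw [norm_mul, norm_pow, norm_inv, habsz,
        Complex.norm_real, Real.norm_of_nonneg (pf_pow_nonneg A hA n i j)]
    have hsumnorm : Summable (fun n : ℕ => ‖z⁻¹ ^ (n + 1) * (((A ^ n) i j : ℝ) : ℂ)‖) := by
      rw [hfn]; exact hsum_u.summable
    have h1 : ‖B i j‖ = ‖∑' n : ℕ, z⁻¹ ^ (n + 1) * (((A ^ n) i j : ℝ) : ℂ)‖ := by
      rw [(hBE i j).tsum_eq]
    rw [h1]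
    calc ‖∑' n : ℕ, z⁻¹ ^ (n + 1) * (((A ^ n) i j : ℝ) : ℂ)‖
        ≤ ∑' n : ℕ, ‖z⁻¹ ^ (n + 1) * (((A ^ n) i j : ℝ) : ℂ)‖ := norm_tsum_le_tsum_norm hsumnorm
      _ = ∑' n : ℕ, u⁻¹ ^ (n + 1) * (A ^ n) i j := by rw [hfn]
      _ = (u • (1 : Matrix (Fin s) (Fin s) ℝ) - A)⁻¹ i j := hsum_u.tsum_eq
      _ ≤ C := le_trans (le_abs_self _) (hinvent u hu1 hu2 i j)
  have hBnorm : ‖B‖ ≤ s * C := pf_norm_le_entries B hC0 hBent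
  -- the unit trick
  set w : ℂ := z - μ₀ with hwdef
  have habsw : ‖w‖ = δ := by
    have hρne : (specRad A : ℝ) ≠ 0 := ne_of_gt hρpos
    have hρneC : ((specRad A : ℝ) : ℂ) ≠ 0 := by exact_mod_cast hρne
    have hw : w = (((u - specRad A) / specRad A : ℝ) : ℂ) * μ₀ := by
      rw [hwdef, hzdef]
      push_cast
      field_simp
    rw [hw, norm_mul, Complex.norm_real, hμabs,
      Real.norm_of_nonneg (div_nonneg (by linarith) hρ0)]
    rw [hudef]
    field_simp
    ring
  have hlt1 : ‖w • B‖ < 1 := by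
    rw [norm_smul, habsw]
    calc δ * ‖B‖ ≤ δ * ((s : ℝ) * C) := by
          apply mul_le_mul_of_nonneg_left hBnorm hδpos.le
      _ = δ * D := by rw [hDdef]
      _ < 1 := hδD
  have hu1' : IsUnit (z • (1 : Matrix (Fin s) (Fin s) ℂ) - Ac) := by
    rw [Matrix.isUnit_iff_isUnit_det, isUnit_iff_ne_zero, ← pf_eval_charpoly]
    intro h
    have := hub z h
    rw [habsz] at this
    linarith
  have hu2' : IsUnit (1 - w • B) := (Units.oneSub (w • B) hlt1).isUnit
  have hprod : (z • (1 : Matrix (Fin s) (Fin s) ℂ) - Ac) * (1 - w • B)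
      = μ₀ • (1 : Matrix (Fin s) (Fin s) ℂ) - Ac := by
    rw [mul_sub, mul_one, Matrix.mul_smul, hB1]
    rw [sub_right_comm, ← sub_smul, hwdef, sub_sub_cancel]
  have hunit : IsUnit (μ₀ • (1 : Matrix (Fin s) (Fin s) ℂ) - Ac) := by
    rw [← hprod]
    exact hu1'.mul hu2'
  rw [Matrix.isUnit_iff_isUnit_det, isUnit_iff_ne_zero, ← pf_eval_charpoly] at hunit
  exact hunit hμroot

end PFR3

open Polynomial in
/-- Every nonnegative real `s × s` matrix `A` (`s ≥ 1`) has a nonzero nonnegative eigenvector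
`U` with `A U = λ U`, where the eigenvalue `λ ≥ 0` is the spectral radius of `A`. -/
theorem perron_frobenius_exists (s : ℕ) (hs : 1 ≤ s) (A : Matrix (Fin s) (Fin s) ℝ)
    (hA : ∀ i j, 0 ≤ A i j) :
    ∃ U : Fin s → ℝ, U ≠ 0 ∧ (∀ i, 0 ≤ U i) ∧
      A.mulVec U = specRad A • U ∧ 0 ≤ specRad A := by
  classical
  have hρ0 : 0 ≤ specRad A := pf_specRad_nonneg A hs
  have hroot : A.charpoly.eval (specRad A) = 0 := pf_isRoot_specRad A hs hA
  have hnonempty : Nonempty (Fin s) := Fin.pos_iff_nonempty.mp hs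
  set N : Matrix (Fin s) (Fin s) (Polynomial ℝ) := (Matrix.charmatrix A).adjugate with hN
  have hNne : N ≠ 0 := by
    intro h
    have hdet := Matrix.det_adjugate (Matrix.charmatrix A)
    rw [← hN, h, Matrix.det_zero] at hdet
    have hne : ((Matrix.charmatrix A).det) ^ (Fintype.card (Fin s) - 1) ≠ 0 :=
      pow_ne_zero _ (Matrix.charpoly_monic A).ne_zero
    exact hne hdet.symm
  obtain ⟨i₁, j₁, hij₁⟩ : ∃ i j, N i j ≠ 0 := by
    by_contra h
    push_neg at h
    exact hNne (Matrix.ext fun i j => by simpa using h i j)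
  set T : Finset (Fin s × Fin s) := Finset.univ.filter (fun ij => N ij.1 ij.2 ≠ 0) with hT
  have hTne : T.Nonempty := ⟨(i₁, j₁), by simp [hT, hij₁]⟩
  set k : ℕ := T.inf' hTne (fun ij => Polynomial.rootMultiplicity (specRad A) (N ij.1 ij.2))
    with hk
  have hdvd : ∀ i j, (X - C (specRad A)) ^ k ∣ N i j := by
    intro i j
    by_cases h : N i j = 0
    · rw [h]; exact dvd_zero _
    · have hmem : (i, j) ∈ T := by simp [hT, h]
      have hle : k ≤ Polynomial.rootMultiplicity (specRad A) (N i j) := Finset.inf'_le _ hmem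
      exact (Polynomial.le_rootMultiplicity_iff h).mp hle
  obtain ⟨ij₀, hij₀mem, hij₀⟩ := T.exists_mem_eq_inf' hTne
    (fun ij => Polynomial.rootMultiplicity (specRad A) (N ij.1 ij.2))
  have hN₀ne : N ij₀.1 ij₀.2 ≠ 0 := by
    have := hij₀mem
    rw [hT, Finset.mem_filter] at this
    exact this.2
  have hc : ∀ i j, ∃ cc : Polynomial ℝ, N i j = (X - C (specRad A)) ^ k * cc := hdvd
  choose c hc using hc
  have hpdvd : (X - C (specRad A)) ^ k ∣ A.charpoly := by
    have hident := Matrix.mul_adjugate (Matrix.charmatrix A)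
    have hentry := congrFun (congrFun hident i₁) i₁
    have h1 : A.charpoly = ∑ m, Matrix.charmatrix A i₁ m * N m i₁ := by
      rw [← Matrix.mul_apply, hentry, Matrix.smul_apply, Matrix.one_apply_eq, smul_eq_mul,
        mul_one]
      rfl
    rw [h1]
    exact Finset.dvd_sum fun m _ => Dvd.dvd.mul_left (hdvd m i₁) _
  obtain ⟨q, hq⟩ := hpdvd
  have hXkne : ((X : Polynomial ℝ) - C (specRad A)) ^ k ≠ 0 :=
    pow_ne_zero _ (Polynomial.X_sub_C_ne_zero (specRad A))
  have hmatkey : Matrix.charmatrix A * Matrix.of c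
      = q • (1 : Matrix (Fin s) (Fin s) (Polynomial ℝ)) := by
    refine Matrix.ext fun i j => ?_
    apply mul_left_cancel₀ hXkne
    have h1 : (X - C (specRad A)) ^ k * ((Matrix.charmatrix A * Matrix.of c) i j)
        = (Matrix.charmatrix A * N) i j := by
      rw [Matrix.mul_apply, Matrix.mul_apply, Finset.mul_sum]
      refine Finset.sum_congr rfl fun m _ => ?_
      rw [Matrix.of_apply, hc m j]
      ring
    have h2 : (Matrix.charmatrix A * N) i j
        = ((X - C (specRad A)) ^ k * q) * (1 : Matrix (Fin s) (Fin s) (Polynomial ℝ)) i j := by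
      rw [hN, Matrix.mul_adjugate, Matrix.smul_apply, smul_eq_mul]
      congr 1
    rw [h1, h2, Matrix.smul_apply, smul_eq_mul]
    ring
  set E : Matrix (Fin s) (Fin s) (Polynomial ℝ) →+* Matrix (Fin s) (Fin s) ℝ :=
    (Polynomial.evalRingHom (specRad A)).mapMatrix with hE
  have happly := congrArg (fun M => E M) hmatkey
  simp only [map_mul] at happly
  have hE1 : E (Matrix.charmatrix A) = (specRad A) • 1 - A := by
    rw [hE, RingHom.mapMatrix_apply]
    exact pf_eval_charmatrix A _
  have hE2 : E (q • (1 : Matrix (Fin s) (Fin s) (Polynomial ℝ)))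
      = (q.eval (specRad A)) • (1 : Matrix (Fin s) (Fin s) ℝ) := by
    rw [hE, RingHom.mapMatrix_apply]
    ext i j
    by_cases h : i = j <;>
      simp [Matrix.map_apply, Matrix.smul_apply, Matrix.one_apply, h]
  set V : Matrix (Fin s) (Fin s) ℝ := E (Matrix.of c) with hV
  have hprod : ((specRad A) • 1 - A) * V = (q.eval (specRad A)) • 1 := by
    rw [← hE1, ← hE2, hV]
    exact happly
  by_cases hq0 : q.eval (specRad A) = 0
  · -- eigenvector from the column ij₀.2 of V
    set U : Fin s → ℝ := fun i => (c i ij₀.2).eval (specRad A) with hU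
    have hUnn : ∀ i, 0 ≤ U i := by
      intro i
      apply pf_poly_nonneg_at (q := c i ij₀.2)
      intro tt htt
      have hadj : 0 ≤ (N i ij₀.2).eval tt := by
        have := pf_adj_entry_nonneg A hs hA htt i ij₀.2
        rw [hN]
        exact this
      rw [hc i ij₀.2, Polynomial.eval_mul, Polynomial.eval_pow, Polynomial.eval_sub,
        Polynomial.eval_X, Polynomial.eval_C] at hadj
      have hpow : 0 < (tt - specRad A) ^ k := pow_pos (by linarith) k
      by_contra hcon
      push_neg at hcon
      nlinarith
    have hU₀ : U ij₀.1 ≠ 0 := by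
      intro h0
      have hdvd1 : (X - C (specRad A)) ∣ c ij₀.1 ij₀.2 := Polynomial.dvd_iff_isRoot.mpr h0
      obtain ⟨d, hd⟩ := hdvd1
      have hdd : (X - C (specRad A)) ^ (k + 1) ∣ N ij₀.1 ij₀.2 :=
        ⟨d, by rw [hc ij₀.1 ij₀.2, hd]; ring⟩
      have hle := (Polynomial.le_rootMultiplicity_iff hN₀ne).mpr hdd
      rw [← hij₀] at hle
      omega
    refine ⟨U, fun h => hU₀ (congrFun h ij₀.1), hUnn, ?_, hρ0⟩
    have hcol : ∀ i, (((specRad A) • 1 - A) * V) i ij₀.2 = 0 := by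
      intro i
      rw [hprod, hq0, zero_smul]
      rfl
    have hVU : ∀ i, V i ij₀.2 = U i := fun i => rfl
    have hmv : ∀ i, (((specRad A) • (1 : Matrix (Fin s) (Fin s) ℝ) - A).mulVec U) i = 0 := by
      intro i
      have h3 := hcol i
      rw [Matrix.mul_apply] at h3
      simp only [hVU] at h3
      simpa [Matrix.mulVec, dotProduct] using h3
    have hfull : ((specRad A) • (1 : Matrix (Fin s) (Fin s) ℝ) - A).mulVec U = 0 := funext hmv
    rw [Matrix.sub_mulVec, Matrix.smul_mulVec, Matrix.one_mulVec] at hfull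
    exact (sub_eq_zero.mp hfull).symm
  · exfalso
    have hdet := congrArg Matrix.det hprod
    rw [Matrix.det_mul, Matrix.det_smul, Matrix.det_one, mul_one] at hdet
    have hdet0 : ((specRad A) • (1 : Matrix (Fin s) (Fin s) ℝ) - A).det = 0 := by
      rw [← pf_eval_charpoly]
      exact hroot
    rw [hdet0, zero_mul] at hdet
    exact (pow_ne_zero _ hq0) hdet.symm
end

section
/- Let N ≥ 1 and let A be an N×N matrix with entries in {0,1} that is irreducible. Then the topological entropy of the shift map σ restricted to the subshift of finite type Σ_A equals log ρ(A), where ρ(A) is the spectral radius of A (the largest modulus of an eigenvalue of A). -/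
/-- The discrete uniformity on `Fin N`; it induces the discrete topology, so the product
uniformity on `ℤ → Fin N` induces the product topology on `Σ_N = {1, …, N}^ℤ`. -/
instance (N : ℕ) : UniformSpace (Fin N) := ⊥

/-- The shift map `σ` on `Σ_N = {1, …, N}^ℤ`, given by `σ(x)_i = x_{i+1}`. -/
def shiftMap (N : ℕ) : (ℤ → Fin N) → (ℤ → Fin N) := fun x i => x (i + 1)

/-- The subshift of finite type determined by a `0-1` transition matrix `A`:
`Σ_A = {x ∈ Σ_N : A_{x_i x_{i+1}} = 1 for all i ∈ ℤ}`. -/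
def subshiftSFT {N : ℕ} (A : Matrix (Fin N) (Fin N) ℝ) : Set (ℤ → Fin N) :=
  {x | ∀ i : ℤ, A (x i) (x (i + 1)) = 1}

open Finset Filter Set Uniformity UniformSpace Dynamics
open scoped Topology ENNReal NNReal

namespace SFTAux

set_option linter.unusedTactic false
set_option linter.unreachableTactic false
set_option linter.unusedVariables false

variable {N : ℕ}

def IsAdm (A : Matrix (Fin N) (Fin N) ℝ) (m : ℕ) (w : Fin m → Fin N) : Prop :=
  ∀ (k : ℕ) (h : k + 1 < m), A (w ⟨k, by omega⟩) (w ⟨k + 1, h⟩) = 1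

/-- 0-1 matrix over ℕ associated to A. -/
noncomputable def B (A : Matrix (Fin N) (Fin N) ℝ) : Matrix (Fin N) (Fin N) ℕ :=
  Matrix.of fun i j => if A i j = 1 then 1 else 0

open Classical in
noncomputable def admCount (A : Matrix (Fin N) (Fin N) ℝ) (m : ℕ) (i j : Fin N) : ℕ :=
  (Finset.univ.filter fun w : Fin (m + 1) → Fin N =>
    IsAdm A (m + 1) w ∧ w 0 = i ∧ w (Fin.last m) = j).card

open Classical in
theorem counting (A : Matrix (Fin N) (Fin N) ℝ) (m : ℕ) (i j : Fin N) :
    (B A ^ m) i j = admCount A m i j := by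
  induction m generalizing i j with
  | zero =>
    rw [pow_zero, admCount]
    by_cases hij : i = j
    · subst hij
      rw [Matrix.one_apply_eq]
      have : (Finset.univ.filter fun w : Fin 1 → Fin N =>
          IsAdm A 1 w ∧ w 0 = i ∧ w (Fin.last 0) = i) = {fun _ => i} := by
        ext w
        simp only [Finset.mem_filter, Finset.mem_univ, true_and, Finset.mem_singleton]
        constructor
        · rintro ⟨-, h0, -⟩
          funext t
          rw [Subsingleton.elim t 0, h0]
        · rintro rfl
          exact ⟨fun k h => by omega, rfl, rfl⟩
      rw [this, Finset.card_singleton]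
    · rw [Matrix.one_apply_ne hij]
      symm
      rw [Finset.card_eq_zero, Finset.filter_eq_empty_iff]
      rintro w - ⟨-, h0, hl⟩
      exact hij (by rw [← h0, ← hl]; congr 1)
  | succ m ih =>
    rw [pow_succ, Matrix.mul_apply, admCount]
    rw [Finset.card_eq_sum_card_fiberwise
      (f := fun w : Fin (m + 1 + 1) → Fin N => w (Fin.castSucc (Fin.last m)))
      (t := Finset.univ) (fun w _ => Finset.mem_univ _)]
    refine Finset.sum_congr rfl fun k _ => ?_
    rw [Finset.filter_filter, ih]
    by_cases hA : A k j = 1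
    · have hB : B A k j = 1 := if_pos hA
      rw [hB, mul_one, admCount]
      refine (Finset.card_bij'
        (i := fun (w : Fin (m + 1 + 1) → Fin N) (_ : w ∈ _) => fun t : Fin (m + 1) => w t.castSucc)
        (j := fun (v : Fin (m + 1) → Fin N) (_ : v ∈ _) => Fin.snoc (α := fun _ => Fin N) v j)
        ?_ ?_ ?_ ?_).symm
      · rintro w hw
        simp only [Finset.mem_filter, Finset.mem_univ, true_and] at hw ⊢
        obtain ⟨⟨hadm, h0, hl⟩, hk⟩ := hw
        refine ⟨fun k' h => ?_, ?_, hk⟩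
        · convert hadm k' (by omega) using 2 <;> exact Fin.ext rfl
        · rw [← h0]; congr 1
      · rintro v hv
        simp only [Finset.mem_filter, Finset.mem_univ, true_and] at hv ⊢
        obtain ⟨hadm, h0, hl⟩ := hv
        refine ⟨⟨fun k' h => ?_, ?_, ?_⟩, ?_⟩
        · by_cases h' : k' + 1 < m + 1
          · have e1 : (⟨k', by omega⟩ : Fin (m + 1 + 1)) = Fin.castSucc ⟨k', by omega⟩ :=
              Fin.ext rfl
            have e2 : (⟨k' + 1, h⟩ : Fin (m + 1 + 1)) = Fin.castSucc ⟨k' + 1, h'⟩ :=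
              Fin.ext rfl
            rw [e1, e2, Fin.snoc_castSucc, Fin.snoc_castSucc]
            exact hadm k' h'
          · have hk' : k' = m := by omega
            subst hk'
            have e1 : (⟨k', by omega⟩ : Fin (k' + 1 + 1)) = Fin.castSucc (Fin.last k') :=
              Fin.ext rfl
            have e2 : (⟨k' + 1, h⟩ : Fin (k' + 1 + 1)) = Fin.last (k' + 1) :=
              Fin.ext rfl
            rw [e1, e2, Fin.snoc_castSucc, Fin.snoc_last, hl]
            exact hA
        · have e0 : (0 : Fin (m + 1 + 1)) = Fin.castSucc 0 := Fin.castSucc_zero.symm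
          rw [e0, Fin.snoc_castSucc, h0]
        · simp
        · rw [Fin.snoc_castSucc, hl]
      · rintro w hw
        simp only [Finset.mem_filter, Finset.mem_univ, true_and] at hw
        obtain ⟨⟨hadm, h0, hl⟩, hk⟩ := hw
        show Fin.snoc (fun t : Fin (m + 1) => w t.castSucc) j = w
        rw [← hl]
        exact Fin.snoc_init_self w
      · rintro v hv
        show (fun t : Fin (m + 1) => Fin.snoc (α := fun _ => Fin N) v j t.castSucc) = v
        funext t
        rw [Fin.snoc_castSucc]
    · have hB : B A k j = 0 := if_neg hA
      rw [hB, mul_zero]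
      symm
      rw [Finset.card_eq_zero, Finset.filter_eq_empty_iff]
      rintro w - ⟨⟨hadm, h0, hl⟩, hk⟩
      have := hadm m (by omega)
      apply hA
      have e1 : (⟨m, by omega⟩ : Fin (m + 1 + 1)) = Fin.castSucc (Fin.last m) := Fin.ext rfl
      have e2 : (⟨m + 1, by omega⟩ : Fin (m + 1 + 1)) = Fin.last (m + 1) := Fin.ext rfl
      rwa [e1, e2, hk, hl] at this

open Classical in
noncomputable def Wordset (A : Matrix (Fin N) (Fin N) ℝ) (m : ℕ) : Finset (Fin m → Fin N) :=
  Finset.univ.filter (IsAdm A m)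

noncomputable def W (A : Matrix (Fin N) (Fin N) ℝ) (m : ℕ) : ℕ := (Wordset A m).card

noncomputable def S (A : Matrix (Fin N) (Fin N) ℝ) (n : ℕ) : ℕ := ∑ i, ∑ j, (B A ^ n) i j

open Classical in
theorem W_succ (A : Matrix (Fin N) (Fin N) ℝ) (m : ℕ) : W A (m + 1) = S A m := by
  rw [W, Wordset, S]
  rw [Finset.card_eq_sum_card_fiberwise
    (f := fun w : Fin (m + 1) → Fin N => (w 0, w (Fin.last m)))
    (t := Finset.univ) (fun w _ => Finset.mem_univ _)]
  rw [← Fintype.sum_prod_type' (f := fun i j => (B A ^ m) i j)]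
  refine Finset.sum_congr rfl fun q _ => ?_
  rw [counting, admCount, Finset.filter_filter]
  congr 1
  ext w
  simp [Prod.ext_iff]

theorem exists_path (A : Matrix (Fin N) (Fin N) ℝ) {m : ℕ} {i j : Fin N}
    (h : 0 < (B A ^ m) i j) :
    ∃ p : Fin (m + 1) → Fin N, IsAdm A (m + 1) p ∧ p 0 = i ∧ p (Fin.last m) = j := by
  classical
  rw [counting, admCount, Finset.card_pos] at h
  obtain ⟨p, hp⟩ := h
  simp only [Finset.mem_filter, Finset.mem_univ, true_and] at hp
  exact ⟨p, hp⟩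

theorem A_eq_B_map {A : Matrix (Fin N) (Fin N) ℝ} (h01 : ∀ i j, A i j = 0 ∨ A i j = 1) :
    A = (B A).map (Nat.cast : ℕ → ℝ) := by
  ext i j
  rcases h01 i j with h | h <;> simp [B, Matrix.map_apply, h]

theorem A_pow_eq {A : Matrix (Fin N) (Fin N) ℝ} (h01 : ∀ i j, A i j = 0 ∨ A i j = 1) (m : ℕ) :
    A ^ m = (B A ^ m).map (Nat.cast : ℕ → ℝ) := by
  conv_lhs => rw [A_eq_B_map h01]
  have h1 : (B A).map (Nat.cast : ℕ → ℝ) = (Nat.castRingHom ℝ).mapMatrix (B A) := rfl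
  have h2 : (B A ^ m).map (Nat.cast : ℕ → ℝ) = (Nat.castRingHom ℝ).mapMatrix (B A ^ m) := rfl
  rw [h1, h2, ← map_pow]

theorem B_pow_pos {A : Matrix (Fin N) (Fin N) ℝ} (h01 : ∀ i j, A i j = 0 ∨ A i j = 1)
    {m : ℕ} {i j : Fin N} (h : 0 < (A ^ m) i j) : 0 < (B A ^ m) i j := by
  rw [A_pow_eq h01] at h
  simpa [Matrix.map_apply] using h

/-- gluing a word and a return path into a pre-periodic sequence -/
def glue {n m : ℕ} (hn : 0 < n) (w : Fin n → Fin N) (p : Fin (m + 1) → Fin N) (k : ℕ) : Fin N :=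
  if h : k < n then w ⟨k, h⟩
  else p ⟨min (k - (n - 1)) m, Nat.lt_succ_of_le (min_le_right _ _)⟩

theorem exists_extension {A : Matrix (Fin N) (Fin N) ℝ}
    (h01 : ∀ i j, A i j = 0 ∨ A i j = 1) (hirr : MatrixIrreducible A)
    {n : ℕ} (hn : 0 < n) (w : Fin n → Fin N) (hw : IsAdm A n w) :
    ∃ x ∈ subshiftSFT A, ∀ k : Fin n, x ((k : ℕ) : ℤ) = w k := by
  obtain ⟨m, hm1, hmpos⟩ := hirr (w ⟨n - 1, by omega⟩) (w ⟨0, hn⟩)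
  have hBpos := B_pow_pos h01 hmpos
  obtain ⟨p, hp, hp0, hpl⟩ := exists_path A hBpos
  set P : ℕ := n + m - 1 with hP
  have hP1 : 1 ≤ P := by omega
  have hnP : n ≤ P := by omega
  set u : ℕ → Fin N := glue hn w p with hu
  have hu1 : ∀ (k : ℕ) (h : k < n), u k = w ⟨k, h⟩ := fun k h => dif_pos h
  have hu2 : ∀ (k : ℕ) (h1 : n - 1 ≤ k) (h2 : k ≤ P), u k = p ⟨k - (n - 1), by omega⟩ := by
    intro k h1 h2
    by_cases h : k < n
    · have hk : k = n - 1 := by omega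
      rw [hu1 k h]
      have e : (⟨k - (n - 1), by omega⟩ : Fin (m + 1)) = 0 := Fin.ext (by simp; omega)
      rw [e, hp0]
      congr 1
      exact Fin.ext (by simp; omega)
    · show (if h' : k < n then w ⟨k, h'⟩ else _) = _
      rw [dif_neg h]
      congr 1
      exact Fin.ext (by simp; omega)
  have hu3 : ∀ k, k + 1 ≤ P → A (u k) (u (k + 1)) = 1 := by
    intro k hk
    by_cases h : k + 1 < n
    · rw [hu1 k (by omega), hu1 (k + 1) h]
      exact hw k h
    · have h1 : n - 1 ≤ k := by omega
      rw [hu2 k h1 (by omega), hu2 (k + 1) (by omega) hk]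
      have e : (⟨k + 1 - (n - 1), by omega⟩ : Fin (m + 1)) =
          ⟨(k - (n - 1)) + 1, by omega⟩ := Fin.ext (by simp; omega)
      rw [e]
      exact hp (k - (n - 1)) (by omega)
  have hu4 : u P = u 0 := by
    rw [hu2 P (by omega) le_rfl, hu1 0 hn]
    have e : (⟨P - (n - 1), by omega⟩ : Fin (m + 1)) = Fin.last m := Fin.ext (by simp; omega)
    rw [e, hpl]
  have hPz : (0 : ℤ) < (P : ℤ) := by exact_mod_cast hP1
  refine ⟨fun i : ℤ => u (i % (P : ℤ)).toNat, ?_, ?_⟩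
  · intro i
    have h0 : 0 ≤ i % (P : ℤ) := Int.emod_nonneg i (ne_of_gt hPz)
    have hlt : i % (P : ℤ) < P := Int.emod_lt_of_pos i hPz
    set r : ℕ := (i % (P : ℤ)).toNat with hr
    have hri : ((r : ℕ) : ℤ) = i % (P : ℤ) := Int.toNat_of_nonneg h0
    have hrP : r < P := by omega
    have key : (i + 1) % (P : ℤ) = ((r : ℤ) + 1) % (P : ℤ) := by
      rw [Int.add_emod i 1, Int.add_emod (r : ℤ) 1, hri, Int.emod_emod_of_dvd i dvd_rfl]
    by_cases hc : r + 1 < P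
    · have e : (i + 1) % (P : ℤ) = ((r + 1 : ℕ) : ℤ) := by
        rw [key]
        push_cast
        exact Int.emod_eq_of_lt (by positivity) (by exact_mod_cast hc)
      show A (u r) (u ((i + 1) % (P : ℤ)).toNat) = 1
      rw [e, Int.toNat_natCast]
      exact hu3 r (by omega)
    · have hrr : r + 1 = P := by omega
      have e : (i + 1) % (P : ℤ) = 0 := by
        rw [key]
        have : ((r : ℤ) + 1) = (P : ℤ) := by exact_mod_cast hrr
        rw [this, Int.emod_self]
      show A (u r) (u ((i + 1) % (P : ℤ)).toNat) = 1
      rw [e]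
      show A (u r) (u (Int.toNat 0)) = 1
      have : u (Int.toNat 0) = u P := by rw [Int.toNat_zero, hu4]
      rw [this, ← hrr]
      exact hu3 r (by omega)
  · intro k
    have h1 : ((k : ℕ) : ℤ) % (P : ℤ) = ((k : ℕ) : ℤ) := by
      apply Int.emod_eq_of_lt (by positivity)
      have : (k : ℕ) < P := lt_of_lt_of_le k.2 hnP
      exact_mod_cast this
    show u (((k : ℕ) : ℤ) % (P : ℤ)).toNat = w k
    rw [h1, Int.toNat_natCast, hu1 (k : ℕ) k.2]

theorem mem_Wordset {A : Matrix (Fin N) (Fin N) ℝ} {m : ℕ} {w : Fin m → Fin N} :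
    w ∈ Wordset A m ↔ IsAdm A m w := by
  simp only [Wordset, Finset.mem_filter, Finset.mem_univ, true_and]

theorem exists_edge {A : Matrix (Fin N) (Fin N) ℝ} (h01 : ∀ i j, A i j = 0 ∨ A i j = 1)
    (hirr : MatrixIrreducible A) (i : Fin N) : ∃ l, B A i l = 1 := by
  obtain ⟨m, hm1, hmpos⟩ := hirr i i
  obtain ⟨p, hp, hp0, hpl⟩ := exists_path A (B_pow_pos h01 hmpos)
  have h := hp 0 (by omega)
  refine ⟨p ⟨1, by omega⟩, ?_⟩
  have e : (⟨0, by omega⟩ : Fin (m + 1)) = 0 := rfl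
  rw [e, hp0] at h
  simp only [B, Matrix.of_apply, if_pos h]

theorem row_sum_pos {A : Matrix (Fin N) (Fin N) ℝ} (h01 : ∀ i j, A i j = 0 ∨ A i j = 1)
    (hirr : MatrixIrreducible A) : ∀ (n : ℕ) (i : Fin N), 1 ≤ ∑ j, (B A ^ n) i j := by
  intro n
  induction n with
  | zero => intro i; simp [Matrix.one_apply]
  | succ n ih =>
    intro i
    obtain ⟨l0, hl0⟩ := exists_edge h01 hirr i
    have key : ∑ j, (B A ^ (n + 1)) i j = ∑ l, B A i l * ∑ j, (B A ^ n) l j := by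
      rw [pow_succ']
      simp_rw [Matrix.mul_apply, Finset.mul_sum]
      rw [Finset.sum_comm]
    rw [key]
    calc (1 : ℕ) = 1 * 1 := rfl
      _ ≤ B A i l0 * ∑ j, (B A ^ n) l0 j := Nat.mul_le_mul hl0.ge (ih l0)
      _ ≤ _ := Finset.single_le_sum (f := fun l => B A i l * ∑ j, (B A ^ n) l j) (fun l _ => Nat.zero_le _) (Finset.mem_univ l0)

section Analysis

attribute [local instance] Matrix.linftyOpNormedRing Matrix.linftyOpNormedAlgebra

noncomputable def Ac (A : Matrix (Fin N) (Fin N) ℝ) : Matrix (Fin N) (Fin N) ℂ :=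
  (B A).map (Nat.cast : ℕ → ℂ)

theorem Ac_pow (A : Matrix (Fin N) (Fin N) ℝ) (n : ℕ) :
    Ac A ^ n = (B A ^ n).map (Nat.cast : ℕ → ℂ) := by
  have h1 : (B A).map (Nat.cast : ℕ → ℂ) = (Nat.castRingHom ℂ).mapMatrix (B A) := rfl
  have h2 : (B A ^ n).map (Nat.cast : ℕ → ℂ) = (Nat.castRingHom ℂ).mapMatrix (B A ^ n) := rfl
  rw [Ac, h1, h2, ← map_pow]

theorem rowsum_eq (A : Matrix (Fin N) (Fin N) ℝ) (n : ℕ) (i : Fin N) :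
    ∑ j, ‖(Ac A ^ n) i j‖₊ = ((∑ j, (B A ^ n) i j : ℕ) : ℝ≥0) := by
  rw [Ac_pow]
  push_cast
  congr 1
  funext j
  simp [Matrix.map_apply]

theorem nnnorm_le_S (A : Matrix (Fin N) (Fin N) ℝ) (n : ℕ) :
    ‖Ac A ^ n‖₊ ≤ ((S A n : ℕ) : ℝ≥0) := by
  rw [Matrix.linfty_opNNNorm_def]
  apply Finset.sup_le
  intro i _
  rw [rowsum_eq]
  have : ∑ j, (B A ^ n) i j ≤ S A n :=
    Finset.single_le_sum (f := fun i => ∑ j, (B A ^ n) i j) (fun _ _ => Nat.zero_le _)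
      (Finset.mem_univ i)
  exact_mod_cast this

theorem S_le_nnnorm (A : Matrix (Fin N) (Fin N) ℝ) (n : ℕ) :
    ((S A n : ℕ) : ℝ≥0) ≤ (N : ℝ≥0) * ‖Ac A ^ n‖₊ := by
  have h : ∀ i : Fin N, ((∑ j, (B A ^ n) i j : ℕ) : ℝ≥0) ≤ ‖Ac A ^ n‖₊ := by
    intro i
    rw [Matrix.linfty_opNNNorm_def, ← rowsum_eq]
    exact Finset.le_sup (f := fun i => ∑ j, ‖(Ac A ^ n) i j‖₊) (Finset.mem_univ i)
  calc ((S A n : ℕ) : ℝ≥0) = ∑ i : Fin N, ((∑ j, (B A ^ n) i j : ℕ) : ℝ≥0) := by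
        rw [S]; push_cast; rfl
    _ ≤ ∑ _i : Fin N, ‖Ac A ^ n‖₊ := Finset.sum_le_sum fun i _ => h i
    _ = (N : ℝ≥0) * ‖Ac A ^ n‖₊ := by
        rw [Finset.sum_const, Finset.card_univ, Fintype.card_fin, nsmul_eq_mul]

theorem one_le_nnnorm {A : Matrix (Fin N) (Fin N) ℝ} (hN : 1 ≤ N)
    (h01 : ∀ i j, A i j = 0 ∨ A i j = 1) (hirr : MatrixIrreducible A) (n : ℕ) :
    1 ≤ ‖Ac A ^ n‖₊ := by
  rw [Matrix.linfty_opNNNorm_def]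
  have i0 : Fin N := ⟨0, hN⟩
  refine le_trans ?_ (Finset.le_sup (f := fun i => ∑ j, ‖(Ac A ^ n) i j‖₊) (Finset.mem_univ i0))
  show 1 ≤ ∑ j, ‖(Ac A ^ n) i0 j‖₊
  rw [rowsum_eq]
  exact_mod_cast row_sum_pos h01 hirr n i0

theorem one_le_S {A : Matrix (Fin N) (Fin N) ℝ} (hN : 1 ≤ N)
    (h01 : ∀ i j, A i j = 0 ∨ A i j = 1) (hirr : MatrixIrreducible A) (n : ℕ) :
    1 ≤ S A n := by
  have i0 : Fin N := ⟨0, hN⟩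
  exact le_trans (row_sum_pos h01 hirr n i0)
    (Finset.single_le_sum (f := fun i => ∑ j, (B A ^ n) i j) (fun _ _ => Nat.zero_le _)
      (Finset.mem_univ i0))

end Analysis


section Gelfand

attribute [local instance] Matrix.linftyOpNormedRing Matrix.linftyOpNormedAlgebra

/-- spectrum of Ac is the root set of its charpoly -/
theorem spectrum_eq_roots (M : Matrix (Fin N) (Fin N) ℂ) :
    spectrum ℂ M = {μ : ℂ | (Matrix.charpoly M).IsRoot μ} := by
  ext μ
  rw [spectrum.mem_iff, Set.mem_setOf_eq, Polynomial.IsRoot]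
  have hdet : (Matrix.charpoly M).eval μ = (algebraMap ℂ (Matrix (Fin N) (Fin N) ℂ) μ - M).det := by
    have h1 : (Matrix.charpoly M).eval μ = (Polynomial.evalRingHom μ) (Matrix.charpoly M) := rfl
    rw [h1, Matrix.charpoly, RingHom.map_det]
    congr 1
    ext i j
    by_cases hij : i = j
    · subst hij
      simp [Matrix.charmatrix_apply_eq, Matrix.algebraMap_matrix_apply, Matrix.sub_apply]
    · simp [Matrix.charmatrix_apply_ne _ _ _ hij, Matrix.algebraMap_matrix_apply, hij,
        Matrix.sub_apply]
  rw [hdet, Matrix.isUnit_iff_isUnit_det, isUnit_iff_ne_zero, not_not]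

theorem specRad_eq_toReal (hN : 1 ≤ N) {A : Matrix (Fin N) (Fin N) ℝ}
    (h01 : ∀ i j, A i j = 0 ∨ A i j = 1) :
    specRad A = (spectralRadius ℂ (Ac A)).toReal ∧
      ∃ z ∈ spectrum ℂ (Ac A), ((‖z‖₊ : ℝ≥0∞) = spectralRadius ℂ (Ac A) ∧ specRad A = ‖z‖) := by
  haveI : Nonempty (Fin N) := ⟨⟨0, hN⟩⟩
  haveI : CompleteSpace (Matrix (Fin N) (Fin N) ℂ) := FiniteDimensional.complete ℂ _
  have hmap : A.map (fun x : ℝ => (x : ℂ)) = Ac A := by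
    ext i j
    rcases h01 i j with h | h <;> simp [Ac, B, Matrix.map_apply, h]
  obtain ⟨z, hz, hzL⟩ := spectrum.exists_nnnorm_eq_spectralRadius (a := Ac A)
  have hset : {r : ℝ | ∃ μ : ℂ, (Matrix.charpoly (A.map (fun x : ℝ => (x : ℂ)))).IsRoot μ ∧
      r = ‖μ‖} = {r : ℝ | ∃ μ ∈ spectrum ℂ (Ac A), r = ‖μ‖} := by
    rw [hmap]
    ext r
    simp only [Set.mem_setOf_eq, spectrum_eq_roots]
  have hgreat : IsGreatest {r : ℝ | ∃ μ ∈ spectrum ℂ (Ac A), r = ‖μ‖} ‖z‖ := by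
    constructor
    · exact ⟨z, hz, rfl⟩
    · rintro r ⟨μ, hμ, rfl⟩
      have : (‖μ‖₊ : ℝ≥0∞) ≤ spectralRadius ℂ (Ac A) :=
        le_iSup₂ (f := fun (μ : ℂ) (_ : μ ∈ spectrum ℂ (Ac A)) => (‖μ‖₊ : ℝ≥0∞)) μ hμ
      rw [← hzL, ENNReal.coe_le_coe] at this
      exact_mod_cast this
  have h1 : specRad A = ‖z‖ := by
    rw [specRad, hset]
    exact hgreat.csSup_eq
  refine ⟨?_, z, hz, hzL, h1⟩
  rw [h1, ← hzL]
  simp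

theorem main_tendsto_aux (hN : 1 ≤ N) {A : Matrix (Fin N) (Fin N) ℝ}
    (h01 : ∀ i j, A i j = 0 ∨ A i j = 1)
    (hnn : ∀ n, 1 ≤ ‖Ac A ^ n‖₊) (hS1 : ∀ n, 1 ≤ S A n) :
    Tendsto (fun n : ℕ => Real.log (S A n) / n) atTop (𝓝 (Real.log (specRad A))) := by
  haveI : Nonempty (Fin N) := ⟨⟨0, hN⟩⟩
  haveI : CompleteSpace (Matrix (Fin N) (Fin N) ℂ) := FiniteDimensional.complete ℂ _
  obtain ⟨hsr, z, hz, hzL, hsz⟩ := specRad_eq_toReal hN h01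
  have G := spectrum.pow_nnnorm_pow_one_div_tendsto_nhds_spectralRadius (Ac A)
  have hLtop : spectralRadius ℂ (Ac A) ≠ ⊤ := by
    rw [← hzL]; exact ENNReal.coe_ne_top
  have hL1 : 1 ≤ spectralRadius ℂ (Ac A) := by
    refine ge_of_tendsto G ?_
    filter_upwards [eventually_ge_atTop 1] with n hn
    refine ENNReal.one_le_rpow ?_ (by positivity)
    exact_mod_cast hnn n
  -- real limit of norms
  set ρ : ℝ := (spectralRadius ℂ (Ac A)).toReal with hρdef
  have hρ1 : 1 ≤ ρ := by
    rw [hρdef, ← ENNReal.toReal_one]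
    exact ENNReal.toReal_mono hLtop hL1
  rw [hsr]
  have htends : Tendsto (fun n : ℕ => ((‖Ac A ^ n‖₊ : ℝ) ^ (1 / (n : ℝ)))) atTop (𝓝 ρ) := by
    have := (ENNReal.tendsto_toReal hLtop).comp G
    refine this.congr fun n => ?_
    rw [Function.comp_apply, ← ENNReal.toReal_rpow, ENNReal.coe_toReal]
  have hlog : Tendsto (fun n : ℕ => Real.log (‖Ac A ^ n‖₊ : ℝ) / n) atTop (𝓝 (Real.log ρ)) := by
    have hcont := (Real.continuousAt_log (by linarith : ρ ≠ 0)).tendsto.comp htends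
    refine hcont.congr fun n => ?_
    rw [Function.comp_apply, Real.log_rpow (by exact_mod_cast lt_of_lt_of_le zero_lt_one (hnn n) : (0:ℝ) < (‖Ac A ^ n‖₊ : ℝ)), one_div, inv_mul_eq_div]
  -- squeeze
  have hup : Tendsto (fun n : ℕ => Real.log (‖Ac A ^ n‖₊ : ℝ) / n + Real.log N / n) atTop
      (𝓝 (Real.log ρ)) := by
    have h0 : Tendsto (fun n : ℕ => Real.log N / n) atTop (𝓝 0) :=
      tendsto_const_div_atTop_nhds_zero_nat _
    simpa using hlog.add h0
  refine tendsto_of_tendsto_of_tendsto_of_le_of_le' hlog hup ?_ ?_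
  · filter_upwards [eventually_ge_atTop 1] with n hn
    have h1 : (0:ℝ) < (‖Ac A ^ n‖₊ : ℝ) := by exact_mod_cast lt_of_lt_of_le zero_lt_one (hnn n)
    have h2 : (‖Ac A ^ n‖₊ : ℝ) ≤ (S A n : ℝ) := by exact_mod_cast nnnorm_le_S A n
    have hll := Real.log_le_log h1 h2
    have hnpos : (0:ℝ) < n := by exact_mod_cast hn
    exact div_le_div_of_nonneg_right hll hnpos.le
  · filter_upwards [eventually_ge_atTop 1] with n hn
    have h1 : (0:ℝ) < (‖Ac A ^ n‖₊ : ℝ) := by exact_mod_cast lt_of_lt_of_le zero_lt_one (hnn n)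
    have h2 : (S A n : ℝ) ≤ (N : ℝ) * (‖Ac A ^ n‖₊ : ℝ) := by exact_mod_cast S_le_nnnorm A n
    have hlogle : Real.log (S A n) ≤ Real.log N + Real.log (‖Ac A ^ n‖₊ : ℝ) := by
      calc Real.log (S A n) ≤ Real.log ((N : ℝ) * (‖Ac A ^ n‖₊ : ℝ)) := by
            apply Real.log_le_log (by exact_mod_cast hS1 n) h2
        _ = Real.log N + Real.log (‖Ac A ^ n‖₊ : ℝ) := Real.log_mul (by positivity) (ne_of_gt h1)
    rw [← add_div]
    have hnpos : (0:ℝ) < n := by exact_mod_cast hn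
    exact div_le_div_of_nonneg_right (by linarith) hnpos.le

theorem main_tendsto (hN : 1 ≤ N) {A : Matrix (Fin N) (Fin N) ℝ}
    (h01 : ∀ i j, A i j = 0 ∨ A i j = 1) (hirr : MatrixIrreducible A) :
    Filter.Tendsto (fun n : ℕ => Real.log (S A n) / n) Filter.atTop
      (nhds (Real.log (specRad A))) :=
  main_tendsto_aux hN h01 (fun n => one_le_nnnorm hN h01 hirr n)
    (fun n => one_le_S hN h01 hirr n)

end Gelfand

/-! ### uniformity -/

def E (N : ℕ) (i : ℤ) : Set ((ℤ → Fin N) × (ℤ → Fin N)) := {xy | xy.1 i = xy.2 i}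

theorem uniformity_eq (N : ℕ) : 𝓤 (ℤ → Fin N) = ⨅ i : ℤ, 𝓟 (E N i) := by
  rw [Pi.uniformity]
  refine iInf_congr fun i => ?_
  have : 𝓤 (Fin N) = 𝓟 SetRel.id := rfl
  rw [this, Filter.comap_principal]
  congr 1

theorem basis (N : ℕ) : (𝓤 (ℤ → Fin N)).HasBasis (fun t : Set ℤ => t.Finite)
    (fun t => ⋂ i ∈ t, E N i) := by
  rw [uniformity_eq]
  exact Filter.hasBasis_iInf_principal_finite _

theorem shift_iterate (N : ℕ) (x : ℤ → Fin N) (j : ℕ) :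
    (shiftMap N)^[j] x = fun i => x (i + j) := by
  induction j with
  | zero => simp
  | succ j ih =>
    rw [Function.iterate_succ_apply', ih]
    funext i
    show x (i + 1 + j) = x (i + (j + 1))
    congr 1
    push_cast
    ring

/-! ### realized words -/

open Classical in
noncomputable def RWordset (A : Matrix (Fin N) (Fin N) ℝ) (a : ℤ) (m : ℕ) :
    Finset (Fin m → Fin N) :=
  Finset.univ.filter fun w => ∃ x ∈ subshiftSFT A, ∀ t : Fin m, x (a + (t : ℕ)) = w t

theorem mem_RWordset {A : Matrix (Fin N) (Fin N) ℝ} {a : ℤ} {m : ℕ} {w : Fin m → Fin N} :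
    w ∈ RWordset A a m ↔ ∃ x ∈ subshiftSFT A, ∀ t : Fin m, x (a + (t : ℕ)) = w t := by
  simp only [RWordset, Finset.mem_filter, Finset.mem_univ, true_and]

theorem shift_mem_subshift {A : Matrix (Fin N) (Fin N) ℝ} {x : ℤ → Fin N}
    (hx : x ∈ subshiftSFT A) (a : ℤ) : (fun i => x (i + a)) ∈ subshiftSFT A := by
  intro i
  have := hx (i + a)
  simpa [add_right_comm] using this

theorem RWordset_shift (A : Matrix (Fin N) (Fin N) ℝ) (a : ℤ) (m : ℕ) :
    RWordset A a m = RWordset A 0 m := by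
  classical
  ext w
  rw [mem_RWordset, mem_RWordset]
  constructor
  · rintro ⟨x, hx, hw⟩
    exact ⟨fun i => x (i + a), shift_mem_subshift hx a, fun t => by
      rw [← hw t]; congr 1; ring⟩
  · rintro ⟨x, hx, hw⟩
    exact ⟨fun i => x (i + -a), shift_mem_subshift hx (-a), fun t => by
      rw [← hw t]; congr 1; ring⟩

theorem RWordset_eq_Wordset {A : Matrix (Fin N) (Fin N) ℝ}
    (h01 : ∀ i j, A i j = 0 ∨ A i j = 1) (hirr : MatrixIrreducible A)
    {m : ℕ} (hm : 0 < m) : RWordset A 0 m = Wordset A m := by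
  classical
  ext w
  rw [mem_RWordset, mem_Wordset]
  constructor
  · rintro ⟨x, hx, hw⟩
    intro k hk
    have h1 := hw ⟨k, by omega⟩
    have h2 := hw ⟨k + 1, hk⟩
    rw [← h1, ← h2]
    have := hx ((k : ℤ))
    simpa [zero_add, add_comm] using this
  · intro hw
    obtain ⟨x, hx, hrest⟩ := exists_extension h01 hirr hm w hw
    exact ⟨x, hx, fun t => by rw [← hrest t, zero_add]⟩

/-! ### mincard bounds -/

theorem mincard_le_W {A : Matrix (Fin N) (Fin N) ℝ} (hN : 1 ≤ N)
    (h01 : ∀ i j, A i j = 0 ∨ A i j = 1) (hirr : MatrixIrreducible A)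
    {t : Set ℤ} {k : ℕ} (htk : ∀ i ∈ t, i.natAbs ≤ k) (hk : 1 ≤ k) (n : ℕ) :
    coverMincard (shiftMap N) (subshiftSFT A) (⋂ i ∈ t, E N i) n ≤ (W A (n + 2 * k) : ℕ∞) := by
  classical
  set m := n + 2 * k with hm
  set a : ℤ := -(k : ℤ) with ha
  -- pick representatives
  have hex : ∀ w ∈ RWordset A a m, ∃ x ∈ subshiftSFT A, ∀ t : Fin m, x (a + (t : ℕ)) = w t :=
    fun w hw => mem_RWordset.mp hw
  haveI : Nonempty (Fin N) := ⟨⟨0, hN⟩⟩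
  choose! pick hpick1 hpick2 using hex
  set s : Finset (ℤ → Fin N) := (RWordset A a m).image pick with hs
  have hcover : IsDynCoverOf (shiftMap N) (subshiftSFT A) (⋂ i ∈ t, E N i) n ↑s := by
    intro x hx
    set w : Fin m → Fin N := fun t => x (a + (t : ℕ)) with hwdef
    have hwmem : w ∈ RWordset A a m :=
      mem_RWordset.mpr ⟨x, hx, fun t => rfl⟩
    have hy := hpick2 w hwmem
    refine ⟨pick w, ?_, ?_⟩
    · exact Finset.mem_coe.mpr (Finset.mem_image_of_mem pick hwmem)
    · show (x, pick w) ∈ dynEntourage (shiftMap N) (⋂ i ∈ t, E N i) n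
      rw [mem_dynEntourage]
      intro j hj
      rw [Set.mem_iInter₂]
      intro i hi
      show ((shiftMap N)^[j] x) i = ((shiftMap N)^[j] (pick w)) i
      rw [shift_iterate, shift_iterate]
      have hik := htk i hi
      set t' : ℕ := (i + j + k).toNat with ht'
      have h1 : a + (t' : ℕ) = i + j := by omega
      have h2 : t' < m := by omega
      have h3 := hy ⟨t', h2⟩
      show x (i + (j : ℤ)) = pick w (i + (j : ℤ))
      rw [← h1]
      rw [h3]
  calc coverMincard (shiftMap N) (subshiftSFT A) (⋂ i ∈ t, E N i) n ≤ (s.card : ℕ∞) :=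
        IsDynCoverOf.coverMincard_le_card hcover
    _ ≤ ((RWordset A a m).card : ℕ∞) := by exact_mod_cast Finset.card_image_le
    _ = (W A m : ℕ∞) := by
        rw [RWordset_shift, RWordset_eq_Wordset h01 hirr (by omega)]
        rfl

theorem W_le_mincard {A : Matrix (Fin N) (Fin N) ℝ} (hN : 1 ≤ N)
    (h01 : ∀ i j, A i j = 0 ∨ A i j = 1) (hirr : MatrixIrreducible A)
    {n : ℕ} (hn : 0 < n) :
    (W A n : ℕ∞) ≤ coverMincard (shiftMap N) (subshiftSFT A) (E N 0) n := by
  classical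
  haveI : Nonempty (Fin N) := ⟨⟨0, hN⟩⟩
  rw [coverMincard]
  refine le_iInf₂ fun s hs => ?_
  have hWcard : W A n ≤ s.card := by
    have hex : ∀ w ∈ Wordset A n, ∃ x ∈ subshiftSFT A, ∀ t : Fin n, x ((t : ℕ) : ℤ) = w t := by
      intro w hw
      exact exists_extension h01 hirr hn w (mem_Wordset.mp hw)
    choose! wit hwit1 hwit2 using hex
    have hcov : ∀ w ∈ Wordset A n, ∃ y ∈ s,
        y ∈ ball (wit w) (dynEntourage (shiftMap N) (E N 0) n) := by
      intro w hw
      have := hs (hwit1 w hw)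
      exact this
    choose! img himg1 himg2 using hcov
    have hval : ∀ w ∈ Wordset A n, ∀ j : Fin n, w j = img w ((j : ℕ) : ℤ) := by
      intro w hw j
      have hball := himg2 w hw
      rw [mem_ball_dynEntourage] at hball
      have hj := hball (j : ℕ) j.2
      rw [UniformSpace.ball, Set.mem_preimage] at hj
      have hj' : ((shiftMap N)^[(j:ℕ)] (wit w)) 0 = ((shiftMap N)^[(j:ℕ)] (img w)) 0 := hj
      rw [shift_iterate, shift_iterate] at hj'
      simp only [zero_add] at hj'
      rw [← hwit2 w hw j]
      exact hj'
    apply Finset.card_le_card_of_injOn img himg1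
    intro w hw w' hw' heq
    funext j
    rw [hval w hw j, hval w' hw' j, heq]
  exact_mod_cast hWcard

theorem ratio_tendsto (a b : ℕ) :
    Tendsto (fun n : ℕ => ((n : ℝ) + a) / ((n : ℝ) + b)) atTop (𝓝 1) := by
  have ha : Tendsto (fun n : ℕ => 1 + (a : ℝ) / n) atTop (𝓝 (1 + 0)) :=
    tendsto_const_nhds.add (tendsto_const_div_atTop_nhds_zero_nat (a : ℝ))
  have hb : Tendsto (fun n : ℕ => 1 + (b : ℝ) / n) atTop (𝓝 (1 + 0)) :=
    tendsto_const_nhds.add (tendsto_const_div_atTop_nhds_zero_nat (b : ℝ))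
  rw [add_zero] at ha hb
  have h := ha.div hb one_ne_zero
  rw [div_one] at h
  refine h.congr' ?_
  filter_upwards [eventually_ge_atTop 1] with n hn
  have hn0 : (n : ℝ) ≠ 0 := by positivity
  simp only [Pi.div_apply]
  field_simp

theorem log_S_tendsto (hN : 1 ≤ N) {A : Matrix (Fin N) (Fin N) ℝ}
    (h01 : ∀ i j, A i j = 0 ∨ A i j = 1) (hirr : MatrixIrreducible A) (a b : ℕ) :
    Tendsto (fun n : ℕ => Real.log (S A (n + a)) / ((n : ℝ) + b)) atTop
      (𝓝 (Real.log (specRad A))) := by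
  have h1 : Tendsto (fun n : ℕ => Real.log (S A (n + a)) / ((n : ℝ) + a)) atTop
      (𝓝 (Real.log (specRad A))) := by
    have := (main_tendsto hN h01 hirr).comp (tendsto_add_atTop_nat a)
    refine this.congr fun n => ?_
    simp only [Function.comp_apply]
    push_cast
    ring_nf
  have h2 := h1.mul (ratio_tendsto a b)
  rw [mul_one] at h2
  refine h2.congr' ?_
  filter_upwards [eventually_ge_atTop 1] with n hn
  have hna : (n : ℝ) + a ≠ 0 := by positivity
  have hnb : (n : ℝ) + b ≠ 0 := by positivity
  field_simp

theorem ereal_tendsto (hN : 1 ≤ N) {A : Matrix (Fin N) (Fin N) ℝ}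
    (h01 : ∀ i j, A i j = 0 ∨ A i j = 1) (hirr : MatrixIrreducible A) (a b : ℕ) :
    Tendsto (fun n : ℕ => ENNReal.log ((W A (n + a + 1) : ℕ∞) : ℝ≥0∞) / ((n + b : ℕ) : EReal))
      atTop (𝓝 ((Real.log (specRad A) : ℝ) : EReal)) := by
  refine Tendsto.congr' ?_ (EReal.tendsto_coe.mpr (log_S_tendsto hN h01 hirr a b))
  filter_upwards [eventually_ge_atTop 1] with n hn
  have hS1 := one_le_S hN h01 hirr (n + a)
  have hlog : ENNReal.log ((W A (n + a + 1) : ℕ∞) : ℝ≥0∞) =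
      ((Real.log (S A (n + a)) : ℝ) : EReal) := by
    rw [W_succ, ENat.toENNReal_coe]
    rw [ENNReal.log_pos_real' (by
      rw [ENNReal.toReal_natCast]
      exact_mod_cast Nat.lt_of_lt_of_le Nat.zero_lt_one hS1)]
    rw [ENNReal.toReal_natCast]
  rw [hlog]
  have hden : ((n + b : ℕ) : EReal) = (((n + b : ℕ) : ℝ) : EReal) := by
    rw [EReal.coe_coe_eq_natCast]
  rw [hden, ← EReal.coe_div]
  congr 1
  push_cast
  ring

theorem entropy_main (hN : 1 ≤ N) {A : Matrix (Fin N) (Fin N) ℝ}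
    (h01 : ∀ i j, A i j = 0 ∨ A i j = 1) (hirr : MatrixIrreducible A) :
    Dynamics.coverEntropy (shiftMap N) (subshiftSFT A) = (Real.log (specRad A) : EReal) := by
  classical
  have hCEE : ∀ U, coverEntropyEntourage (shiftMap N) (subshiftSFT A) U =
      atTop.limsup (fun n : ℕ =>
        ENNReal.log (coverMincard (shiftMap N) (subshiftSFT A) U n) / (n : EReal)) :=
    fun U => rfl
  rw [coverEntropy_eq_iSup_basis (basis N) (shiftMap N) (subshiftSFT A)]
  apply le_antisymm
  · refine iSup₂_le fun t ht => ?_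
    set k : ℕ := (ht.toFinset.sup Int.natAbs) + 1 with hkdef
    have htk : ∀ i ∈ t, i.natAbs ≤ k := fun i hi =>
      le_trans (Finset.le_sup (ht.mem_toFinset.mpr hi)) (Nat.le_succ _)
    have hk1 : 1 ≤ k := by omega
    have hT0 := ereal_tendsto hN h01 hirr (2 * k - 1) 0
    have hT : Tendsto (fun n : ℕ => ENNReal.log ((W A (n + 2 * k) : ℕ∞) : ℝ≥0∞) / (n : EReal))
        atTop (𝓝 ((Real.log (specRad A) : ℝ) : EReal)) := by
      refine hT0.congr fun n => ?_
      have h1 : n + (2 * k - 1) + 1 = n + 2 * k := by omega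
      have h2 : ((n + 0 : ℕ) : EReal) = (n : EReal) := by norm_num
      rw [h1, h2]
    have hterm : ∀ n : ℕ,
        ENNReal.log (coverMincard (shiftMap N) (subshiftSFT A) (⋂ i ∈ t, E N i) n) / (n : EReal)
          ≤ ENNReal.log ((W A (n + 2 * k) : ℕ∞) : ℝ≥0∞) / (n : EReal) := by
      intro n
      apply EReal.monotone_div_right_of_nonneg (Nat.cast_nonneg' n)
      apply ENNReal.log_monotone
      exact ENat.toENNReal_mono (mincard_le_W hN h01 hirr htk hk1 n)
    rw [hCEE]
    calc atTop.limsup (fun n : ℕ =>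
          ENNReal.log (coverMincard (shiftMap N) (subshiftSFT A) (⋂ i ∈ t, E N i) n) / (n : EReal))
        ≤ atTop.limsup fun n : ℕ =>
            ENNReal.log ((W A (n + 2 * k) : ℕ∞) : ℝ≥0∞) / (n : EReal) :=
          limsup_le_limsup (Eventually.of_forall hterm)
      _ = _ := hT.limsup_eq
  · have hlow : Tendsto (fun n : ℕ => ENNReal.log ((W A n : ℕ∞) : ℝ≥0∞) / (n : EReal)) atTop
        (𝓝 ((Real.log (specRad A) : ℝ) : EReal)) := by
      rw [← tendsto_add_atTop_iff_nat 1]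
      have h := ereal_tendsto hN h01 hirr 0 1
      refine h.congr fun n => ?_
      rw [show n + 0 + 1 = n + 1 from rfl]
    have hle : (Real.log (specRad A) : EReal)
        ≤ coverEntropyEntourage (shiftMap N) (subshiftSFT A) (E N 0) := by
      rw [hCEE, ← hlow.limsup_eq]
      have hev : (fun n : ℕ => ENNReal.log ((W A n : ℕ∞) : ℝ≥0∞) / (n : EReal)) ≤ᶠ[atTop]
          (fun n : ℕ => ENNReal.log (coverMincard (shiftMap N) (subshiftSFT A) (E N 0) n) /
            (n : EReal)) := by
        filter_upwards [eventually_ge_atTop 1] with n hn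
        apply EReal.monotone_div_right_of_nonneg (Nat.cast_nonneg' n)
        apply ENNReal.log_monotone
        exact ENat.toENNReal_mono (W_le_mincard hN h01 hirr hn)
      exact limsup_le_limsup hev
    refine le_trans hle ?_
    have heq : (⋂ i ∈ ({0} : Set ℤ), E N i) = E N 0 := by simp
    refine le_trans (le_of_eq (by rw [heq])) (le_iSup₂ (f := fun (t : Set ℤ) (_ : t.Finite) =>
      coverEntropyEntourage (shiftMap N) (subshiftSFT A) (⋂ i ∈ t, E N i))
      ({0} : Set ℤ) (Set.finite_singleton 0))

end SFTAux

/-- If `A` is an irreducible `N × N` matrix with entries in `{0, 1}` (`N ≥ 1`), then the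
topological entropy of the shift map restricted to the subshift of finite type `Σ_A` equals
`log ρ(A)`, where `ρ(A)` is the spectral radius of `A`. -/
theorem entropy_subshift_eq_log_specRad (N : ℕ) (hN : 1 ≤ N)
    (A : Matrix (Fin N) (Fin N) ℝ) (h01 : ∀ i j, A i j = 0 ∨ A i j = 1)
    (hirr : MatrixIrreducible A) :
    Dynamics.coverEntropy (shiftMap N) (subshiftSFT A) = (Real.log (specRad A) : EReal) :=
  SFTAux.entropy_main hN h01 hirr
end

section
/- Let f : X → X be a continuous map of a compact metric space X, and suppose the nonwandering set decomposes as Ω(f) = Λ_1 ∪ Λ_2 ∪ … ∪ Λ_k, where each Λ_i is a nonempty compact f-invariant set and the Λ_i are pairwise disjoint. Then the topological entropy of f satisfies h(f) = max_{1 ≤ i ≤ k} h(f|_{Λ_i}). -/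
/-- The set of nonwandering points of `f`: points `x` such that for every neighborhood `U`
of `x` there exist `n ≥ 1` and `y ∈ U` with `f^[n] y ∈ U`. -/
def nonWanderingSet {X : Type*} [TopologicalSpace X] (f : X → X) : Set X :=
  {x | ∀ U ∈ nhds x, ∃ n : ℕ, 1 ≤ n ∧ ∃ y ∈ U, f^[n] y ∈ U}

open Dynamics Set Uniformity UniformSpace Filter Asymptotics
open scoped ENNReal
open scoped SetRel

section Aux

lemma coverMincard_mono_set {X : Type*} (T : X → X) {F G : Set X} (h : F ⊆ G)
    (U : Set (X × X)) (n : ℕ) : coverMincard T F U n ≤ coverMincard T G U n :=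
  biInf_mono fun s hs => h.trans hs

lemma coverEntropy_mono_set {X : Type*} [UniformSpace X] (T : X → X) {F G : Set X} (h : F ⊆ G) :
    coverEntropy T F ≤ coverEntropy T G := by
  refine iSup₂_mono fun U _ => limsup_le_limsup (Eventually.of_forall fun n => ?_)
  exact EReal.monotone_div_right_of_nonneg (by exact_mod_cast Nat.zero_le n)
    (ENNReal.log_monotone (ENat.toENNReal_mono (coverMincard_mono_set T h U n)))
lemma EReal_le_of_forall_add {x : EReal} {h : ℝ} (H : ∀ γ : ℝ, 0 < γ → x ≤ ((h + γ : ℝ) : EReal)) :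
    x ≤ (h : EReal) := by
  by_contra hx
  push_neg at hx
  rcases eq_or_ne x ⊤ with rfl | hxt
  · exact absurd (H 1 one_pos) (by exact (EReal.coe_lt_top (h+1)).not_ge)
  · have hxb : x ≠ ⊥ := ne_of_gt ((EReal.bot_lt_coe h).trans hx)
    lift x to ℝ using ⟨hxt, hxb⟩
    rw [EReal.coe_lt_coe_iff] at hx
    have := H ((x - h)/2) (by linarith)
    rw [EReal.coe_le_coe_iff] at this
    linarith
lemma ENNReal_log_natCast (c : ℕ) (hc : 1 ≤ c) :
    ENNReal.log (c : ℝ≥0∞) = ((Real.log c : ℝ) : EReal) := by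
  rw [← ENNReal.ofReal_natCast, ENNReal.log_ofReal_of_pos (by exact_mod_cast hc)]

lemma log_nat_div_le_iff (c n : ℕ) (hc : 1 ≤ c) (hn : 1 ≤ n) (x : ℝ) :
    ENNReal.log (c : ℝ≥0∞) / (n : EReal) ≤ (x : EReal) ↔ Real.log c / n ≤ x := by
  have hne : ((n:ℕ) : EReal) = ((n : ℝ) : EReal) := by
    rw [EReal.coe_coe_eq_natCast]
  rw [ENNReal_log_natCast c hc, hne, ← EReal.coe_div, EReal.coe_le_coe_iff]

lemma exists_nhd_staying_subset {X : Type*} [MetricSpace X] [CompactSpace X] {f : X → X}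
    (hf : Continuous f) {Λ G : Set X} (hΛ : IsCompact Λ) (hG : IsOpen G) (hΛG : Λ ⊆ G)
    {ℓ : ℕ} (hℓ : 1 ≤ ℓ) :
    ∃ N : Set X, IsOpen N ∧ Λ ⊆ N ∧ {y | ∀ r < ℓ, f^[r] y ∈ N} ⊆ G := by
  set V : ℕ → Set X := fun m => ⋂ (r : ℕ) (_ : r < ℓ),
    f^[r] ⁻¹' (Metric.cthickening (1/(m+1)) Λ) with hV
  have hVclosed : ∀ m, IsClosed (V m) := by
    intro m
    exact isClosed_biInter fun r _ =>
      (Metric.isClosed_cthickening).preimage (hf.iterate r)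
  have hVanti : Antitone V := by
    intro m m' hmm'
    refine Set.iInter₂_mono fun r _ => Set.preimage_mono (Metric.cthickening_mono ?_ Λ)
    have : (0:ℝ) < m + 1 := by positivity
    apply one_div_le_one_div_of_le this
    exact_mod_cast Nat.add_le_add_right hmm' 1
  have hdir : Directed (· ⊇ ·) V := fun m m' =>
    ⟨max m m', hVanti (le_max_left m m'), hVanti (le_max_right m m')⟩
  have hInter : (⋂ m, V m) ⊆ G := by
    intro x hx
    apply hΛG
    have hx0 : ∀ m : ℕ, x ∈ Metric.cthickening (1/(m+1)) Λ := by
      intro m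
      have := Set.mem_iInter.1 hx m
      simp only [hV, Set.mem_iInter, Set.mem_preimage] at this
      have := this 0 (by omega)
      simpa using this
    have : x ∈ closure Λ := by
      rw [Metric.closure_eq_iInter_cthickening]
      refine Set.mem_iInter₂.2 fun δ hδ => ?_
      obtain ⟨m, hm⟩ := exists_nat_one_div_lt hδ
      exact Metric.cthickening_mono hm.le Λ (hx0 m)
    rwa [hΛ.isClosed.closure_eq] at this
  obtain ⟨m, hm⟩ := exists_subset_nhds_of_isCompact' hdir
    (fun m => (hVclosed m).isCompact) hVclosed
    (fun x hx => hG.mem_nhds (hInter hx))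
  refine ⟨Metric.thickening (1/(m+1)) Λ, Metric.isOpen_thickening,
    Metric.self_subset_thickening (by positivity) Λ, ?_⟩
  intro y hy
  apply hm
  simp only [hV, Set.mem_iInter, Set.mem_preimage]
  intro r hr
  exact Metric.thickening_subset_cthickening _ _ (hy r hr)

lemma exists_uniform_disjoint_thickening {X : Type*} [MetricSpace X] {k : ℕ}
    (Λ : Fin k → Set X) (hcomp : ∀ i, IsCompact (Λ i))
    (hdisj : ∀ i j, i ≠ j → Disjoint (Λ i) (Λ j)) :
    ∃ δ : ℝ, 0 < δ ∧ ∀ i j, i ≠ j →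
      Disjoint (Metric.thickening δ (Λ i)) (Metric.thickening δ (Λ j)) := by
  classical
  have hex : ∀ p : Fin k × Fin k, ∃ δ, 0 < δ ∧
      (p.1 ≠ p.2 → Disjoint (Metric.thickening δ (Λ p.1)) (Metric.thickening δ (Λ p.2))) := by
    intro p
    by_cases hp : p.1 ≠ p.2
    · obtain ⟨δ, hδ, hd⟩ := (hdisj p.1 p.2 hp).exists_thickenings (hcomp p.1) (hcomp p.2).isClosed
      exact ⟨δ, hδ, fun _ => hd⟩
    · exact ⟨1, one_pos, fun h => absurd h hp⟩
  choose r hr1 hr2 using hex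
  set S : Finset ℝ := insert 1 (Finset.univ.image r) with hS
  have hSne : S.Nonempty := ⟨1, Finset.mem_insert_self 1 _⟩
  refine ⟨S.min' hSne, ?_, ?_⟩
  · have := S.min'_mem hSne
    have this2 : S.min' hSne = 1 ∨ S.min' hSne ∈ Finset.univ.image r :=
      Finset.mem_insert.1 this
    rcases this2 with h | h
    · rw [h]; exact one_pos
    · obtain ⟨p, _, hp⟩ := Finset.mem_image.1 h
      rw [← hp]; exact hr1 p
  · intro i j hij
    have hle : S.min' hSne ≤ r (i, j) :=
      S.min'_le _ (Finset.mem_insert_of_mem (Finset.mem_image.2 ⟨(i,j), Finset.mem_univ _, rfl⟩))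
    exact (hr2 (i,j) hij).mono (Metric.thickening_mono hle _) (Metric.thickening_mono hle _)

lemma exists_good_q (p ℓ₀ : ℕ) (hℓ : 1 ≤ ℓ₀) (A : ℝ) (hA : 0 ≤ A) {ε : ℝ} (hε : 0 < ε) :
    ∃ q : ℕ, 1 ≤ q ∧ (p : ℝ) * Real.log (1 + q * A) / (q * ℓ₀) ≤ ε := by
  rcases eq_or_lt_of_le hA with rfl | hA'
  · exact ⟨1, le_refl 1, by simp [Real.log_one]; positivity⟩
  have h2 : Tendsto (fun q : ℕ => 1 + (q:ℝ) * A) atTop atTop := by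
    apply tendsto_atTop_add_const_left
    exact Tendsto.atTop_mul_const hA' tendsto_natCast_atTop_atTop
  have h1 : (fun q : ℕ => Real.log (1 + (q:ℝ) * A)) =o[atTop] (fun q : ℕ => 1 + (q:ℝ) * A) :=
    Real.isLittleO_log_id_atTop.comp_tendsto h2
  have h3 : (fun q : ℕ => 1 + (q:ℝ) * A) =O[atTop] (fun q : ℕ => (q:ℝ)) := by
    rw [isBigO_iff]
    refine ⟨1 + A, eventually_atTop.2 ⟨1, fun q hq => ?_⟩⟩
    have hq1 : (1:ℝ) ≤ q := by exact_mod_cast hq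
    rw [Real.norm_eq_abs, Real.norm_eq_abs, abs_of_nonneg (by positivity),
      abs_of_nonneg (by positivity)]
    nlinarith
  have h4 : Tendsto (fun q : ℕ => Real.log (1 + (q:ℝ) * A) / q) atTop (nhds 0) :=
    (h1.trans_isBigO h3).tendsto_div_nhds_zero
  have h5 : Tendsto (fun q : ℕ => ((p:ℝ)/ℓ₀) * (Real.log (1 + (q:ℝ) * A) / q)) atTop (nhds 0) := by
    have := h4.const_mul ((p:ℝ)/ℓ₀)
    simpa using this
  have h6 : ∀ᶠ q : ℕ in atTop, ((p:ℝ)/ℓ₀) * (Real.log (1 + (q:ℝ) * A) / q) ≤ ε :=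
    h5.eventually_le_const hε
  obtain ⟨q, hq1, hq2⟩ := (h6.and (eventually_ge_atTop 1)).exists
  refine ⟨q, hq2, ?_⟩
  have hrw : (p : ℝ) * Real.log (1 + q * A) / (q * ℓ₀)
      = ((p:ℝ)/ℓ₀) * (Real.log (1 + (q:ℝ) * A) / q) := by ring
  rw [hrw]; exact hq1

lemma exists_bad_time_bound {X : Type*} [TopologicalSpace X] [CompactSpace X] (f : X → X)
    {W : Set X} (hWo : IsOpen W) (hW : nonWanderingSet f ⊆ W) :
    ∃ p : ℕ, ∀ (x : X) (S : Finset ℕ), (∀ j ∈ S, f^[j] x ∉ W) → S.card ≤ p := by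
  classical
  set K := Wᶜ with hK
  have hKcomp : IsCompact K := (hWo.isClosed_compl).isCompact
  have hKnw : ∀ x ∈ K, ∃ U ∈ nhds x, ∀ m, 1 ≤ m → ∀ y ∈ U, f^[m] y ∉ U := by
    intro x hx
    have hx' : x ∉ nonWanderingSet f := fun h => hx (hW h)
    simp only [nonWanderingSet, Set.mem_setOf_eq] at hx'
    push_neg at hx'
    obtain ⟨U, hU, hU2⟩ := hx'
    exact ⟨U, hU, fun m hm y hy hy2 => hU2 m hm y hy hy2⟩
  set VV : X → Set X := fun x =>
    if h : ∃ U ∈ nhds x, ∀ m, 1 ≤ m → ∀ y ∈ U, f^[m] y ∉ U then h.choose else Set.univ with hVV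
  have hVVmem : ∀ x ∈ K, VV x ∈ nhds x := by
    intro x hx
    have h := hKnw x hx
    simp only [hVV, dif_pos h]
    exact h.choose_spec.1
  have hVVnr : ∀ x ∈ K, ∀ m, 1 ≤ m → ∀ y ∈ VV x, f^[m] y ∉ VV x := by
    intro x hx
    have h := hKnw x hx
    simp only [hVV, dif_pos h]
    exact h.choose_spec.2
  obtain ⟨t, ht_sub, ht_cov⟩ := hKcomp.elim_nhds_subcover VV (fun x hx => hVVmem x hx)
  refine ⟨t.card, fun x S hS => ?_⟩
  have hmem : ∀ j ∈ S, ∃ a ∈ t, f^[j] x ∈ VV a := by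
    intro j hj
    have : f^[j] x ∈ K := hS j hj
    have := ht_cov this
    simpa using this
  set φ : ℕ → X := fun j => if h : ∃ a ∈ t, f^[j] x ∈ VV a then h.choose else x with hφ
  have hφt : ∀ j ∈ S, φ j ∈ t := by
    intro j hj
    have h := hmem j hj
    simp only [hφ, dif_pos h]
    exact h.choose_spec.1
  have hφmem : ∀ j ∈ S, f^[j] x ∈ VV (φ j) := by
    intro j hj
    have h := hmem j hj
    simp only [hφ, dif_pos h]
    exact h.choose_spec.2
  refine Finset.card_le_card_of_injOn φ hφt ?_
  intro j hj j' hj' hφeq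
  by_contra hne
  rcases Nat.lt_or_ge j j' with hlt | hge
  · have key := hVVnr (φ j) (ht_sub _ (hφt j hj)) (j' - j) (by omega) (f^[j] x) (hφmem j hj)
    rw [← Function.iterate_add_apply, Nat.sub_add_cancel hlt.le] at key
    rw [hφeq] at key
    exact key (hφmem j' hj')
  · have hlt : j' < j := by omega
    have key := hVVnr (φ j') (ht_sub _ (hφt j' hj')) (j - j') (by omega) (f^[j'] x) (hφmem j' hj')
    rw [← Function.iterate_add_apply, Nat.sub_add_cancel hlt.le] at key
    rw [← hφeq] at key
    exact key (hφmem j hj)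

lemma exists_good_entourage {X : Type*} [UniformSpace X] {E : Set (X × X)} (hE : E ∈ 𝓤 X) :
    ∃ V ∈ 𝓤 X, IsOpen V ∧ SetRel.IsSymm V ∧ (V ○ V) ○ (V ○ V) ⊆ E ∧ SetRel.IsSymm (V ○ V) := by
  obtain ⟨B, hB, hBsymm, hBE⟩ := comp_symm_mem_uniformity_sets hE
  obtain ⟨B', hB', hB'symm, hB'B⟩ := comp_symm_mem_uniformity_sets hB
  obtain ⟨V, ⟨hV, hVopen, hVsymm⟩, hVB'⟩ := (uniformity_hasBasis_open_symmetric.mem_iff).1 hB'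
  refine ⟨V, hV, hVopen, hVsymm, ?_, ?_⟩
  · have h1 : V ○ V ⊆ B := (SetRel.comp_subset_comp hVB' hVB').trans hB'B
    exact (SetRel.comp_subset_comp h1 h1).trans hBE
  · haveI := hVsymm; infer_instance
lemma exists_onestep_cover {X : Type*} [UniformSpace X] [CompactSpace X] {V : Set (X × X)}
    (hV : V ∈ 𝓤 X) :
    ∃ c₀ : Finset X, ∀ y : X, ∃ b ∈ c₀, (b, y) ∈ V := by
  obtain ⟨t, -, ht⟩ := isCompact_univ.elim_nhds_subcover (fun x => ball x V)
    (fun x _ => UniformSpace.ball_mem_nhds x hV)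
  refine ⟨t, fun y => ?_⟩
  have := ht (mem_univ y)
  simp only [mem_iUnion] at this
  obtain ⟨b, hb, hy⟩ := this
  exact ⟨b, hb, hy⟩

lemma coverMincard_le_card_of_coding {X : Type*} (T : X → X) {V : Set (X × X)}
    (Vsymm : SetRel.IsSymm V) {n : ℕ} {C : Type*} [Fintype C] (e : X → C) (w : C → ℕ → X)
    (hw : ∀ x : X, ∀ j < n, (w (e x) j, T^[j] x) ∈ V) :
    coverMincard T univ (V ○ V) n ≤ Fintype.card C := by
  classical
  rcases isEmpty_or_nonempty X with hX | hX
  · have : (univ : Set X) = ∅ := by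
      ext x; exact absurd trivial (fun _ => (IsEmpty.false x))
    simp [this]
  set rep : C → X := fun v => if h : ∃ x, e x = v then h.choose else Classical.arbitrary X with hrep
  have hcov : IsDynCoverOf T univ (V ○ V) n (Finset.univ.image rep : Finset X) := by
    intro x _
    have hex : ∃ y, e y = e x := ⟨x, rfl⟩
    refine ⟨rep (e x), ?_, ?_⟩
    · simp only [Finset.coe_image, Finset.coe_univ, image_univ, mem_range]
      exact ⟨e x, rfl⟩
    · rw [mem_dynEntourage]
      intro j hj
      have hz : e (hex.choose) = e x := hex.choose_spec
      have h1 : (w (e x) j, T^[j] (hex.choose)) ∈ V := by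
        have := hw hex.choose j hj
        rwa [hz] at this
      have h2 : (w (e x) j, T^[j] x) ∈ V := hw x j hj
      have hrepx : rep (e x) = hex.choose := by rw [hrep]; simp [hex]
      rw [hrepx]
      exact ⟨w (e x) j, Vsymm.symm _ _ h2, h1⟩
  calc coverMincard T univ (V ○ V) n ≤ ((Finset.univ.image rep).card : ℕ∞) :=
        hcov.coverMincard_le_card
    _ ≤ Fintype.card C := by
        exact_mod_cast (Finset.card_image_le).trans (le_of_eq (Finset.card_univ))

set_option maxHeartbeats 1000000 in
lemma coverMincard_bound_of_structure {X : Type*} [Nonempty X] (f : X → X) {V : Set (X × X)}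
    (hVsymm : SetRel.IsSymm V)
    {k p q ℓ₀ : ℕ} (hk : 1 ≤ k) (hℓ₀ : 1 ≤ ℓ₀)
    (W : Fin k → Set X) (s : Fin k → Finset X) (c₀ : Finset X)
    (hc₀ : ∀ y : X, ∃ b ∈ c₀, (b, y) ∈ V)
    (hcover : ∀ i (y : X), (∀ r < ℓ₀, f^[r] y ∈ W i) →
      ∃ a ∈ s i, ∀ r < ℓ₀, (f^[r] a, f^[r] y) ∈ V)
    (hsne : ∀ i, (s i).Nonempty)
    (hpers : ∀ i (x : X), x ∈ W i → f x ∈ ⋃ m, W m → f x ∈ W i)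
    (hbad : ∀ (x : X) (S : Finset ℕ), (∀ j ∈ S, f^[j] x ∉ ⋃ m, W m) → S.card ≤ p) :
    coverMincard f Set.univ (V ○ V) (q * ℓ₀)
      ≤ ((q * c₀.card ^ ℓ₀ + 1) ^ p * (∑ i, (s i).card) ^ q : ℕ) := by
  classical
  have hℓ₀pos : 0 < ℓ₀ := hℓ₀
  set Irr := (Fin ℓ₀ → {b // b ∈ c₀}) with hIrr
  set Reg := (Σ i : Fin k, {a // a ∈ s i}) with hReg
  haveI : Nonempty Reg :=
    ⟨⟨⟨0, hk⟩, ⟨(hsne ⟨0, hk⟩).choose, (hsne ⟨0, hk⟩).choose_spec⟩⟩⟩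
  -- one-step coding function
  choose bfun hbmem hbV using hc₀
  -- irregular window data
  set dData : X → ℕ → Irr := fun x t => fun r => ⟨bfun (f^[t * ℓ₀ + (r : ℕ)] x), hbmem _⟩
    with hdData
  -- regularity of windows
  set Regular : X → ℕ → Prop := fun x t => ∃ i, ∀ r < ℓ₀, f^[t * ℓ₀ + r] x ∈ W i with hRegular
  -- regular window data
  set P : X → ℕ → Reg → Prop :=
    fun x t ra => ∀ r < ℓ₀, (f^[r] (ra.2 : X), f^[t * ℓ₀ + r] x) ∈ V with hP
  set regData : X → ℕ → Reg := fun x t =>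
    if h : ∃ ra : Reg, P x t ra then h.choose else Classical.arbitrary Reg with hregData
  have hregDataP : ∀ (x : X) (t : ℕ), Regular x t → P x t (regData x t) := by
    intro x t ⟨i, hi⟩
    have hex : ∃ ra : Reg, P x t ra := by
      obtain ⟨a, ha, hV⟩ := hcover i (f^[t * ℓ₀] x) (fun r hr => by
        have hit : f^[r] (f^[t * ℓ₀] x) = f^[t * ℓ₀ + r] x := by
          rw [← Function.iterate_add_apply, add_comm]
        rw [hit]
        exact hi r hr)
      refine ⟨⟨i, ⟨a, ha⟩⟩, fun r hr => ?_⟩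
      have hit : f^[r] (f^[t * ℓ₀] x) = f^[t * ℓ₀ + r] x := by
        rw [← Function.iterate_add_apply, add_comm]
      have := hV r hr
      rwa [hit] at this
    simp only [hregData, dif_pos hex]
    exact hex.choose_spec
  -- windows that are fully inside ⋃ W are regular
  have window_reg : ∀ (x : X) (t : ℕ),
      (∀ r < ℓ₀, f^[t * ℓ₀ + r] x ∈ ⋃ m, W m) → Regular x t := by
    intro x t hall
    obtain ⟨i, hi⟩ : ∃ i, f^[t * ℓ₀] x ∈ W i := by
      have := hall 0 hℓ₀pos
      rw [Nat.add_zero] at this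
      exact mem_iUnion.1 this
    refine ⟨i, ?_⟩
    intro r hr
    induction r with
    | zero => simpa using hi
    | succ r ih =>
      have h1 : f^[t * ℓ₀ + r] x ∈ W i := ih (by omega)
      have h2 : f^[(t * ℓ₀ + r) + 1] x ∈ ⋃ m, W m := by
        have := hall (r + 1) hr
        rwa [← add_assoc] at this
      rw [Function.iterate_succ_apply'] at h2
      have h3 := hpers i _ h1 h2
      rw [← add_assoc, Function.iterate_succ_apply']
      exact h3
  -- the set of irregular windows
  set R : X → Finset (Fin q) := fun x => Finset.univ.filter (fun t => ¬ Regular x (t : ℕ))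
    with hR
  -- irregular windows contain a bad time
  have hbadr : ∀ (x : X) (t : Fin q), t ∈ R x →
      ∃ r < ℓ₀, f^[(t : ℕ) * ℓ₀ + r] x ∉ ⋃ m, W m := by
    intro x t ht
    rw [hR, Finset.mem_filter] at ht
    by_contra hcon
    push_neg at hcon
    exact ht.2 (window_reg x t hcon)
  -- few irregular windows
  have hRcard : ∀ x : X, (R x).card ≤ p := by
    intro x
    choose! badr hbadr1 hbadr2 using hbadr x
    set ψ : Fin q → ℕ := fun t => (t : ℕ) * ℓ₀ + badr t with hψ
    have hinj : Set.InjOn ψ (R x) := by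
      intro t ht t' ht' htt'
      have h1 : badr t < ℓ₀ := hbadr1 t ht
      have h2 : badr t' < ℓ₀ := hbadr1 t' ht'
      have e1 : ((t : ℕ) * ℓ₀ + badr t) / ℓ₀ = (t : ℕ) := by
        rw [mul_comm, Nat.mul_add_div hℓ₀pos, Nat.div_eq_of_lt h1, add_zero]
      have e2 : ((t' : ℕ) * ℓ₀ + badr t') / ℓ₀ = (t' : ℕ) := by
        rw [mul_comm, Nat.mul_add_div hℓ₀pos, Nat.div_eq_of_lt h2, add_zero]
      have : (t : ℕ) = (t' : ℕ) := by
        simp only [hψ] at htt'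
        rw [← e1, htt', e2]
      exact Fin.ext this
    have := hbad x ((R x).image ψ) (by
      intro j hj
      obtain ⟨t, ht, rfl⟩ := Finset.mem_image.1 hj
      exact hbadr2 t ht)
    rwa [Finset.card_image_of_injOn hinj] at this
  -- the encoding
  set g : X → Fin p → Option (Fin q × Irr) := fun x m =>
    (((R x).sort (· ≤ ·))[(m : ℕ)]?).map (fun t => (t, dData x (t : ℕ))) with hg
  set e : X → (Fin p → Option (Fin q × Irr)) × (Fin q → Reg) :=
    fun x => (g x, fun t => regData x (t : ℕ)) with he
  set w : ((Fin p → Option (Fin q × Irr)) × (Fin q → Reg)) → ℕ → X := fun v j =>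
    if hj : j < q * ℓ₀ then
      let t : Fin q := ⟨j / ℓ₀, by rwa [Nat.div_lt_iff_lt_mul hℓ₀pos]⟩
      let r : Fin ℓ₀ := ⟨j % ℓ₀, Nat.mod_lt _ hℓ₀pos⟩
      if hsome : ∃ m : Fin p, ∃ d : Irr, v.1 m = some (t, d) then
        ((hsome.choose_spec.choose) r : X)
      else f^[(r : ℕ)] ((v.2 t).2 : X)
    else Classical.arbitrary X
    with hwdef
  have hw : ∀ x : X, ∀ j < q * ℓ₀, (w (e x) j, f^[j] x) ∈ V := by
    intro x j hj
    set t : Fin q := ⟨j / ℓ₀, by rwa [Nat.div_lt_iff_lt_mul hℓ₀pos]⟩ with hts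
    set r : Fin ℓ₀ := ⟨j % ℓ₀, Nat.mod_lt _ hℓ₀pos⟩ with hrs
    have hj_eq : (t : ℕ) * ℓ₀ + (r : ℕ) = j := Nat.div_add_mod' j ℓ₀
    -- a helper: any value recorded in `g x` is the canonical data
    have hg_canon : ∀ (m : Fin p) (t' : Fin q) (d : Irr),
        g x m = some (t', d) → d = dData x (t' : ℕ) ∧ t' ∈ R x := by
      intro m t' d hm
      rw [hg] at hm
      rcases Option.map_eq_some_iff.1 hm with ⟨t'', ht'', heq⟩
      obtain ⟨rfl, rfl⟩ : t'' = t' ∧ dData x (t'' : ℕ) = d := by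
        constructor
        · exact congrArg Prod.fst heq
        · exact congrArg Prod.snd heq
      refine ⟨rfl, ?_⟩
      obtain ⟨hlt, heq'⟩ := List.getElem?_eq_some_iff.1 ht''
      have : t'' ∈ (R x).sort (· ≤ ·) := heq' ▸ List.getElem_mem hlt
      rwa [Finset.mem_sort] at this
    by_cases hsome : ∃ m : Fin p, ∃ d : Irr, (e x).1 m = some (t, d)
    · have hw_eq : w (e x) j = ((hsome.choose_spec.choose) r : X) := by
        rw [hwdef]
        simp only [hj, dif_pos]
        rw [dif_pos hsome]
      obtain ⟨hd_eq, -⟩ := hg_canon hsome.choose t (hsome.choose_spec.choose)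
        hsome.choose_spec.choose_spec
      rw [hw_eq, hd_eq]
      have : ((dData x (t : ℕ)) r : X) = bfun (f^[(t : ℕ) * ℓ₀ + (r : ℕ)] x) := rfl
      rw [this, hj_eq]
      exact hbV _
    · -- regular case
      have hreg : Regular x (t : ℕ) := by
        by_contra hcon
        have htR : t ∈ R x := by
          rw [hR, Finset.mem_filter]
          exact ⟨Finset.mem_univ t, hcon⟩
        have hmem : t ∈ (R x).sort (· ≤ ·) := (Finset.mem_sort _).2 htR
        obtain ⟨idx, hidx, hgetl⟩ := List.getElem_of_mem hmem
        have hlen : ((R x).sort (· ≤ ·)).length ≤ p := by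
          rw [Finset.length_sort]
          exact hRcard x
        refine hsome ⟨⟨idx, lt_of_lt_of_le hidx hlen⟩, dData x (t : ℕ), ?_⟩
        rw [he]
        simp only [hg]
        rw [List.getElem?_eq_getElem hidx, hgetl]
        rfl
      have hw_eq : w (e x) j = f^[(r : ℕ)] (((e x).2 t).2 : X) := by
        rw [hwdef]
        simp only [hj, dif_pos]
        rw [dif_neg hsome]
      rw [hw_eq]
      have hP := hregDataP x (t : ℕ) hreg
      have := hP (r : ℕ) r.2
      rw [hj_eq] at this
      exact this
  have hmain := coverMincard_le_card_of_coding f hVsymm e w hw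
  apply hmain.trans
  have hcardeq : Fintype.card ((Fin p → Option (Fin q × Irr)) × (Fin q → Reg))
      = (q * c₀.card ^ ℓ₀ + 1) ^ p * (∑ i, (s i).card) ^ q := by
    have hIrrc : Fintype.card Irr = c₀.card ^ ℓ₀ := by
      simp [hIrr, Fintype.card_fun, Fintype.card_coe]
    have hRegc : Fintype.card Reg = ∑ i, (s i).card := by
      simp [hReg, Fintype.card_sigma, Fintype.card_coe]
    simp [Fintype.card_prod, Fintype.card_fun, Fintype.card_option, hIrrc, hRegc]
  rw [hcardeq]

end Aux

set_option maxHeartbeats 2000000 in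
/-- Let `f : X → X` be a continuous map of a compact metric space whose nonwandering set
decomposes as `Ω(f) = Λ_1 ∪ ⋯ ∪ Λ_k` where the `Λ_i` are nonempty, compact, `f`-invariant
and pairwise disjoint. Then the topological entropy of `f` is the maximum of the entropies
of the restrictions `f|_{Λ_i}`. -/
theorem entropy_eq_max_of_nonwandering_decomposition {X : Type*} [MetricSpace X]
    [CompactSpace X] (f : X → X) (hf : Continuous f) (k : ℕ) (hk : 1 ≤ k)
    (Λ : Fin k → Set X) (hne : ∀ i, (Λ i).Nonempty) (hcomp : ∀ i, IsCompact (Λ i))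
    (hinv : ∀ i, f '' Λ i = Λ i) (hdisj : ∀ i j, i ≠ j → Disjoint (Λ i) (Λ j))
    (hdecomp : nonWanderingSet f = ⋃ i, Λ i) :
    Dynamics.coverEntropy f Set.univ = ⨆ i, Dynamics.coverEntropy f (Λ i) := by
  classical
  have i0 : Fin k := ⟨0, hk⟩
  haveI : Nonempty X := ⟨(hne i0).some⟩
  refine le_antisymm ?_ (iSup_le fun i => coverEntropy_mono_set f (Set.subset_univ (Λ i)))
  set H := ⨆ i, Dynamics.coverEntropy f (Λ i) with hH
  have hH0 : (0 : EReal) ≤ H :=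
    le_trans (coverEntropy_nonneg f (hne i0))
      (le_iSup (fun i => Dynamics.coverEntropy f (Λ i)) i0)
  rcases eq_or_ne H ⊤ with hHtop | hHtop
  · rw [hHtop]; exact le_top
  have hHbot : H ≠ ⊥ := by intro hb; rw [hb] at hH0; simp at hH0
  set h : ℝ := H.toReal with hh
  have hHh : H = (h : EReal) := (EReal.coe_toReal hHtop hHbot).symm
  have hmapsΛ : ∀ i, Set.MapsTo f (Λ i) (Λ i) := fun i x hx => by
    rw [show Λ i = f '' Λ i from (hinv i).symm]; exact Set.mem_image_of_mem f hx
  have key : ∀ E ∈ 𝓤 X, coverEntropyEntourage f univ E ≤ (h : EReal) := by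
    intro E hE
    apply EReal_le_of_forall_add
    intro γ hγ
    -- choose a good entourage
    obtain ⟨V, hV𝓤, hVopen, hVsymm, hVE, hVVsymm⟩ := exists_good_entourage hE
    -- one-step cover
    obtain ⟨c₀, hc₀⟩ := exists_onestep_cover hV𝓤
    set γ₁ : ℝ := γ / 4 with hγ₁def
    -- eventual bound from the entropies of the pieces
    have hev : ∀ᶠ ℓ : ℕ in atTop, ∀ i,
        ENNReal.log (coverMincard f (Λ i) V ℓ) / (ℓ : EReal) < ((h + γ₁ : ℝ) : EReal) := by
      rw [eventually_all]
      intro i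
      have h1 : coverEntropyEntourage f (Λ i) V < ((h + γ₁ : ℝ) : EReal) := by
        have h2 : coverEntropyEntourage f (Λ i) V ≤ H :=
          (coverEntropyEntourage_le_coverEntropy f (Λ i) hV𝓤).trans
            (le_iSup (fun i => Dynamics.coverEntropy f (Λ i)) i)
        refine lt_of_le_of_lt (h2.trans_eq hHh) ?_
        exact_mod_cast (by linarith : h < h + γ₁)
      exact eventually_lt_of_limsup_lt h1
    obtain ⟨N₁, hN₁⟩ := eventually_atTop.1 hev
    obtain ⟨N₂, hN₂⟩ := exists_nat_ge (4 * Real.log k / γ)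
    set ℓ₀ := max (max N₁ N₂) 1 with hℓ₀def
    have hℓ₀1 : 1 ≤ ℓ₀ := le_max_right _ 1
    have hℓ₀pos : (0:ℝ) < (ℓ₀:ℝ) := by exact_mod_cast hℓ₀1
    have hlogk : Real.log k ≤ γ / 4 * ℓ₀ := by
      have h1 : 4 * Real.log k / γ ≤ (N₂ : ℝ) := hN₂
      have h2 : (N₂ : ℝ) ≤ (ℓ₀ : ℝ) := by
        exact_mod_cast (le_max_right N₁ N₂).trans (le_max_left _ 1)
      rw [div_le_iff₀ hγ] at h1
      nlinarith
    -- minimal covers of the pieces at time ℓ₀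
    have hfin : ∀ i, coverMincard f (Λ i) V ℓ₀ < ⊤ := fun i =>
      coverMincard_finite_of_isCompact_invariant (hcomp i) (hmapsΛ i) hV𝓤 ℓ₀
    choose s hscov hscard using fun i => (coverMincard_finite_iff f (Λ i) V ℓ₀).1 (hfin i)
    have hsne : ∀ i, (s i).Nonempty := by
      intro i
      rw [← Finset.card_pos]
      have h1 := (one_le_coverMincard_iff f (Λ i) V ℓ₀).2 (hne i)
      rw [← hscard i] at h1
      exact_mod_cast h1
    have hscard1 : ∀ i, 1 ≤ (s i).card := fun i => Finset.card_pos.2 (hsne i)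
    have hslog : ∀ i, Real.log ((s i).card) ≤ (h + γ₁) * ℓ₀ := by
      intro i
      have hlt := hN₁ ℓ₀ ((le_max_left N₁ N₂).trans (le_max_left _ 1)) i
      rw [← hscard i] at hlt
      rw [ENat.toENNReal_coe] at hlt
      have := (log_nat_div_le_iff ((s i).card) ℓ₀ (hscard1 i) hℓ₀1 (h + γ₁)).1 hlt.le
      rwa [div_le_iff₀ hℓ₀pos] at this
    -- dynamical-ball neighborhoods of the pieces
    set G : Fin k → Set X := fun i => ⋃ a ∈ (s i : Finset X), ball a (dynEntourage f V ℓ₀)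
      with hGdef
    have hGopen : ∀ i, IsOpen (G i) := fun i => isOpen_biUnion fun a _ =>
      (isOpen.dynEntourage hf hVopen ℓ₀).preimage (Continuous.prodMk_right a)
    have hΛG : ∀ i, Λ i ⊆ G i := fun i x hx => by
      obtain ⟨a, ha, hxa⟩ := hscov i hx
      haveI := hVsymm
      exact mem_iUnion₂.2 ⟨a, ha, (show (a, x) ∈ dynEntourage f V ℓ₀ from SetRel.symm _ hxa)⟩
    choose N hNopen hΛN hNG using fun i =>
      exists_nhd_staying_subset hf (hcomp i) (hGopen i) (hΛG i) hℓ₀1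
    -- disjoint open thickenings
    obtain ⟨δ, hδ, hOdisj⟩ := exists_uniform_disjoint_thickening Λ hcomp hdisj
    set O : Fin k → Set X := fun i => Metric.thickening δ (Λ i) with hOdef
    set W : Fin k → Set X := fun i => (O i ∩ f ⁻¹' (O i)) ∩ N i with hWdef
    have hWopen : ∀ i, IsOpen (W i) :=
      fun i => ((Metric.isOpen_thickening.inter
        (Metric.isOpen_thickening.preimage hf)).inter (hNopen i))
    have hΛW : ∀ i, Λ i ⊆ W i := by
      intro i x hx
      refine ⟨⟨Metric.self_subset_thickening hδ _ hx, ?_⟩, hΛN i hx⟩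
      exact Metric.self_subset_thickening hδ _ (hmapsΛ i hx)
    have hcover : ∀ i (y : X), (∀ r < ℓ₀, f^[r] y ∈ W i) →
        ∃ a ∈ s i, ∀ r < ℓ₀, (f^[r] a, f^[r] y) ∈ V := by
      intro i y hy
      have hyG : y ∈ G i := hNG i (fun r hr => (hy r hr).2)
      obtain ⟨a, ha, hball⟩ := mem_iUnion₂.1 hyG
      refine ⟨a, ha, fun r hr => ?_⟩
      have := mem_ball_dynEntourage.1 hball r hr
      exact this
    have hpers : ∀ i (x : X), x ∈ W i → f x ∈ ⋃ m, W m → f x ∈ W i := by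
      intro i x hx hfx
      obtain ⟨m, hm⟩ := mem_iUnion.1 hfx
      rcases eq_or_ne m i with rfl | hmi
      · exact hm
      · exact absurd hx.1.2 fun hfxOi =>
          Set.disjoint_left.1 (hOdisj m i hmi) hm.1.1 hfxOi
    have hΩ : nonWanderingSet f ⊆ ⋃ m, W m := by
      rw [hdecomp]; exact iUnion_mono hΛW
    obtain ⟨p, hp⟩ := exists_bad_time_bound f (isOpen_iUnion hWopen) hΩ
    -- choosing the number of windows
    obtain ⟨q, hq1, hq2⟩ := exists_good_q p ℓ₀ hℓ₀1 ((c₀.card ^ ℓ₀ : ℕ) : ℝ) (Nat.cast_nonneg _)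
      (by linarith : (0:ℝ) < γ / 2)
    set n := q * ℓ₀ with hndef
    have hn1 : 1 ≤ n := Nat.one_le_iff_ne_zero.2 (by positivity)
    have hnpos : 0 < n := hn1
    -- the combinatorial bound
    have hmincard := coverMincard_bound_of_structure f hVsymm hk hℓ₀1 W s c₀ hc₀ hcover hsne
      hpers hp (q := q)
    set Ncd : ℕ := (q * c₀.card ^ ℓ₀ + 1) ^ p * (∑ i, (s i).card) ^ q with hNcddef
    have hsum1 : 1 ≤ ∑ i, (s i).card := by
      calc 1 ≤ (s i0).card := hscard1 i0
        _ ≤ ∑ i, (s i).card := Finset.single_le_sum (f := fun i => (s i).card) (fun i _ => Nat.zero_le _) (Finset.mem_univ i0)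
    have hNcd1 : 1 ≤ Ncd := by
      have h1 : 0 < (q * c₀.card ^ ℓ₀ + 1) ^ p := pow_pos (Nat.succ_pos _) p
      have h2 : 0 < (∑ i, (s i).card) ^ q := pow_pos hsum1 q
      exact Nat.mul_pos h1 h2
    -- the entropy chain
    have hent1 : coverEntropyEntourage f univ ((V ○ V) ○ (V ○ V)) ≤
        ENNReal.log (coverMincard f univ (V ○ V) n) / (n : EReal) :=
      haveI := hVVsymm; coverEntropyEntourage_le_log_coverMincard_div (Set.mapsTo_univ f univ) hnpos.ne'
    have hent2 : coverEntropyEntourage f univ E ≤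
        coverEntropyEntourage f univ ((V ○ V) ○ (V ○ V)) :=
      coverEntropyEntourage_antitone f univ hVE
    have hmono : ENNReal.log (coverMincard f univ (V ○ V) n) / (n : EReal) ≤
        ENNReal.log ((Ncd : ℕ∞) : ℝ≥0∞) / (n : EReal) := by
      apply EReal.monotone_div_right_of_nonneg (by exact_mod_cast Nat.zero_le n)
      exact ENNReal.log_monotone (ENat.toENNReal_mono hmincard)
    -- the numerical estimate
    have hreal : Real.log Ncd / n ≤ h + γ := by
      have hA : ((q * c₀.card ^ ℓ₀ + 1 : ℕ) : ℝ) = 1 + (q : ℝ) * ((c₀.card ^ ℓ₀ : ℕ) : ℝ) := by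
        push_cast; ring
      have hq2' : (p : ℝ) * Real.log (1 + (q : ℝ) * ((c₀.card ^ ℓ₀ : ℕ) : ℝ)) ≤
          γ / 2 * ((q : ℝ) * (ℓ₀ : ℝ)) := by
        have hqp : (0:ℝ) < (q : ℝ) * (ℓ₀ : ℝ) := by
          have : (0:ℝ) < (q:ℝ) := by exact_mod_cast hq1
          positivity
        rw [div_le_iff₀ hqp] at hq2
        · convert hq2 using 2 <;> push_cast <;> ring
      -- bound on log of the sum of cards
      obtain ⟨i₁, -, hi₁⟩ := Finset.exists_max_image Finset.univ (fun i => (s i).card)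
        ⟨i0, Finset.mem_univ i0⟩
      have hsumk : (∑ i, (s i).card) ≤ k * (s i₁).card := by
        calc (∑ i, (s i).card) ≤ Finset.univ.card * (s i₁).card :=
              Finset.sum_le_card_nsmul Finset.univ _ _ (fun i _ => hi₁ i (Finset.mem_univ i))
          _ = k * (s i₁).card := by rw [Finset.card_univ, Fintype.card_fin]
      have hlogsum : Real.log (∑ i, (s i).card) ≤ Real.log k + (h + γ₁) * ℓ₀ := by
        calc Real.log (∑ i, (s i).card) ≤ Real.log ((k : ℝ) * ((s i₁).card : ℝ)) := by
              apply Real.log_le_log (by exact_mod_cast hsum1)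
              exact_mod_cast hsumk
          _ = Real.log k + Real.log ((s i₁).card) := by
              have hk0 : ((k:ℕ):ℝ) ≠ 0 := by
                have : (0:ℝ) < (k:ℝ) := by exact_mod_cast hk
                exact this.ne'
              have hc0 : (((s i₁).card : ℕ):ℝ) ≠ 0 := by
                have : (0:ℝ) < ((s i₁).card:ℝ) := by exact_mod_cast hscard1 i₁
                exact this.ne'
              rw [Real.log_mul hk0 hc0]
          _ ≤ Real.log k + (h + γ₁) * ℓ₀ := by linarith [hslog i₁]
      have hlogNcd : Real.log Ncd = (p : ℝ) * Real.log ((q * c₀.card ^ ℓ₀ + 1 : ℕ) : ℝ)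
          + (q : ℝ) * Real.log ((∑ i, (s i).card : ℕ) : ℝ) := by
        have hx1 : ((q * c₀.card ^ ℓ₀ + 1 : ℕ) : ℝ) ≠ 0 := by
          have : (0:ℝ) < ((q * c₀.card ^ ℓ₀ + 1 : ℕ) : ℝ) := by
            exact_mod_cast Nat.succ_pos (q * c₀.card ^ ℓ₀)
          exact this.ne'
        have hx2 : ((∑ i, (s i).card : ℕ) : ℝ) ≠ 0 := by
          have : (0:ℝ) < ((∑ i, (s i).card : ℕ) : ℝ) := by exact_mod_cast hsum1
          exact this.ne'
        have e1 : ((Ncd : ℕ) : ℝ)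
            = ((q * c₀.card ^ ℓ₀ + 1 : ℕ) : ℝ) ^ p * ((∑ i, (s i).card : ℕ) : ℝ) ^ q := by
          rw [hNcddef]; push_cast; ring
        rw [e1, Real.log_mul (pow_ne_zero _ hx1) (pow_ne_zero _ hx2), Real.log_pow,
          Real.log_pow]
      have hn_posR : (0:ℝ) < (n : ℝ) := by exact_mod_cast hnpos
      rw [div_le_iff₀ hn_posR]
      have hnrw : ((n : ℕ) : ℝ) = (q : ℝ) * (ℓ₀ : ℝ) := by rw [hndef]; push_cast; ring
      rw [hlogNcd, hA, hnrw]
      have hb2 : (q : ℝ) * Real.log ((∑ i, (s i).card : ℕ) : ℝ) ≤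
          (q : ℝ) * (Real.log k + (h + γ₁) * ℓ₀) := by
        apply mul_le_mul_of_nonneg_left _ (by positivity)
        exact_mod_cast hlogsum
      have hb3 : (q : ℝ) * (Real.log k + (h + γ₁) * ℓ₀) ≤
          (q : ℝ) * ((γ / 4) * ℓ₀ + (h + γ₁) * ℓ₀) := by
        apply mul_le_mul_of_nonneg_left _ (by positivity)
        linarith
      have : (q : ℝ) * ((γ / 4) * ℓ₀ + (h + γ₁) * ℓ₀) + γ / 2 * ((q : ℝ) * (ℓ₀ : ℝ))
          = (h + γ) * ((q : ℝ) * (ℓ₀ : ℝ)) := by rw [hγ₁def]; ring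
      linarith
    -- conclude
    have hfinal : ENNReal.log ((Ncd : ℕ∞) : ℝ≥0∞) / (n : EReal) ≤ ((h + γ : ℝ) : EReal) := by
      rw [ENat.toENNReal_coe]
      exact (log_nat_div_le_iff Ncd n hNcd1 hn1 (h + γ)).2 hreal
    exact hent2.trans (hent1.trans (hmono.trans hfinal))
  calc Dynamics.coverEntropy f Set.univ = ⨆ E ∈ 𝓤 X, coverEntropyEntourage f univ E := rfl
    _ ≤ (h : EReal) := iSup₂_le key
    _ = H := hHh.symm
end

section
/- Let X be a compact metric space and let 𝓐 be a fixed finite open cover of X. For a continuous map g : X → X and n ≥ 1 let N_n(g) denote the minimal cardinality of a subcover of X by sets of the form A_{j_0} ∩ g^{-1}(A_{j_1}) ∩ … ∩ g^{-(n-1)}(A_{j_{n-1}}) with A_{j_i} ∈ 𝓐, and let h(𝓐, g) = lim_{n→∞} (1/n) log N_n(g) (this limit exists and equals inf_n (1/n) log N_n(g)). Then the function g ↦ h(𝓐, g) is upper semicontinuous on the space of continuous self-maps of X equipped with the topology of uniform convergence. -/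
open Set

/-- `coverNum 𝓐 g n` is the minimal number `m` such that `X` can be covered by `m` sets of
the form `A_{j_0} ∩ g⁻¹(A_{j_1}) ∩ ⋯ ∩ g^{-(n-1)}(A_{j_{n-1}})` with all `A_{j_i} ∈ 𝓐`,
i.e. the minimal cardinality of a subcover of the join `⋁_{i=0}^{n-1} g^{-i} 𝓐`. -/
noncomputable def coverNum {X : Type*} [TopologicalSpace X] (𝓐 : Finset (Set X))
    (g : X → X) (n : ℕ) : ℕ :=
  sInf {m : ℕ | ∃ c : Fin m → Fin n → Set X, (∀ k i, c k i ∈ 𝓐) ∧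
    (⋃ k, ⋂ i : Fin n, g^[i.1] ⁻¹' c k i) = Set.univ}

/-- The entropy of `g` relative to the cover `𝓐`:
`h(𝓐, g) = lim_{n → ∞} (1/n) log N_n(g) = inf_{n ≥ 1} (1/n) log N_n(g)`
(the limit exists and equals the infimum by subadditivity). -/
noncomputable def coverEnt {X : Type*} [TopologicalSpace X] (𝓐 : Finset (Set X))
    (g : X → X) : ℝ :=
  ⨅ n : ℕ, Real.log (coverNum 𝓐 g (n + 1)) / (n + 1)

/-! ### Auxiliary lemmas -/

/-- The `i`-th iterate of a continuous self-map, as a continuous map. -/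
noncomputable def iterCM {X : Type*} [TopologicalSpace X] (g : C(X, X)) (i : ℕ) : C(X, X) :=
  ⟨(⇑g)^[i], g.continuous.iterate i⟩

lemma continuous_iterCM {X : Type*} [MetricSpace X] [CompactSpace X] (i : ℕ) :
    Continuous fun g : C(X, X) => iterCM g i := by
  induction i with
  | zero =>
      have : (fun g : C(X, X) => iterCM g 0) = fun _ => ContinuousMap.id X := by
        ext g x; rfl
      rw [this]; exact continuous_const
  | succ i ih =>
      have : (fun g : C(X, X) => iterCM g (i + 1))
          = fun g : C(X, X) => g.comp (iterCM g i) := by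
        ext g x
        exact Function.iterate_succ_apply' (⇑g) i x
      rw [this]
      exact Continuous.compCM continuous_id ih

/-- The map `g ↦ (x ↦ (g^[i] x)_i)` into `C(X, Fin n → X)`. -/
noncomputable def iterPi {X : Type*} [TopologicalSpace X] (n : ℕ) (g : C(X, X)) :
    C(X, Fin n → X) :=
  ContinuousMap.pi fun i => iterCM g i.1

lemma continuous_iterPi {X : Type*} [MetricSpace X] [CompactSpace X] (n : ℕ) :
    Continuous (iterPi (X := X) n) := by
  rw [continuous_iff_continuousAt]
  intro g₀
  rw [ContinuousAt, Metric.tendsto_nhds]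
  intro ε hε
  have h : ∀ i : Fin n, ∀ᶠ g : C(X, X) in nhds g₀,
      dist (iterCM g i.1) (iterCM g₀ i.1) ≤ ε / 2 := by
    intro i
    have := (continuous_iterCM (X := X) i.1).continuousAt (x := g₀)
    have h2 := (Metric.tendsto_nhds.1 this) (ε / 2) (half_pos hε)
    exact h2.mono fun g hg => le_of_lt hg
  have hall := (Filter.eventually_all).2 h
  refine hall.mono fun g hg => ?_
  have hle : dist (iterPi n g) (iterPi n g₀) ≤ ε / 2 := by
    refine (ContinuousMap.dist_le (half_pos hε).le).2 fun x => ?_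
    refine dist_pi_le_iff (half_pos hε).le |>.2 fun i => ?_
    calc dist (iterCM g i.1 x) (iterCM g₀ i.1 x) ≤ dist (iterCM g i.1) (iterCM g₀ i.1) :=
          ContinuousMap.dist_apply_le_dist x
      _ ≤ ε / 2 := hg i
  exact lt_of_le_of_lt hle (half_lt_self hε)

lemma isOpen_coverSet {X : Type*} [MetricSpace X] [CompactSpace X] {n m : ℕ}
    (c : Fin m → Fin n → Set X) (hc : ∀ k i, IsOpen (c k i)) :
    IsOpen {g : C(X, X) | (⋃ k, ⋂ i : Fin n, (⇑g)^[i.1] ⁻¹' c k i) = univ} := by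
  set U : Set (Fin n → X) := ⋃ k, ⋂ i : Fin n, (fun v : Fin n → X => v i) ⁻¹' c k i with hU
  have hUopen : IsOpen U := by
    refine isOpen_iUnion fun k => isOpen_iInter_of_finite fun i => ?_
    exact (hc k i).preimage (continuous_apply i)
  have key : {g : C(X, X) | (⋃ k, ⋂ i : Fin n, (⇑g)^[i.1] ⁻¹' c k i) = univ}
      = iterPi n ⁻¹' {h : C(X, Fin n → X) | MapsTo h univ U} := by
    ext g
    constructor
    · intro h x _
      have hx : x ∈ ⋃ k, ⋂ i : Fin n, (⇑g)^[i.1] ⁻¹' c k i := h ▸ mem_univ x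
      obtain ⟨k, hk⟩ := mem_iUnion.1 hx
      exact mem_iUnion.2 ⟨k, mem_iInter.2 fun i => mem_iInter.1 hk i⟩
    · intro h
      show (⋃ k, ⋂ i : Fin n, (⇑g)^[i.1] ⁻¹' c k i) = univ
      rw [eq_univ_iff_forall]
      intro x
      have hx := h (mem_univ x)
      obtain ⟨k, hk⟩ := mem_iUnion.1 hx
      exact mem_iUnion.2 ⟨k, mem_iInter.2 fun i => mem_iInter.1 hk i⟩
  rw [key]
  exact (ContinuousMap.isOpen_setOf_mapsTo isCompact_univ hUopen).preimage (continuous_iterPi n)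

lemma coverSet_nonempty {X : Type*} [TopologicalSpace X] (𝓐 : Finset (Set X))
    (hcover : ⋃₀ (𝓐 : Set (Set X)) = univ) (g : X → X) (n : ℕ) :
    {m : ℕ | ∃ c : Fin m → Fin n → Set X, (∀ k i, c k i ∈ 𝓐) ∧
      (⋃ k, ⋂ i : Fin n, g^[i.1] ⁻¹' c k i) = Set.univ}.Nonempty := by
  classical
  set m := Fintype.card (Fin n → {A // A ∈ 𝓐}) with hm
  refine ⟨m, ?_⟩
  let e : Fin m ≃ (Fin n → {A // A ∈ 𝓐}) := (Fintype.equivFin _).symm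
  refine ⟨fun k i => (e k i : Set X), fun k i => (e k i).2, ?_⟩
  rw [eq_univ_iff_forall]
  intro x
  have hA : ∀ i : Fin n, ∃ A ∈ 𝓐, g^[i.1] x ∈ A := by
    intro i
    have : g^[i.1] x ∈ ⋃₀ (𝓐 : Set (Set X)) := by rw [hcover]; trivial
    obtain ⟨A, hA, hxA⟩ := this
    exact ⟨A, hA, hxA⟩
  choose f hf1 hf2 using hA
  refine mem_iUnion.2 ⟨e.symm (fun i => ⟨f i, hf1 i⟩), mem_iInter.2 fun i => ?_⟩
  simp only [mem_preimage, e.apply_symm_apply]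
  exact hf2 i

lemma log_nat_nonneg (m : ℕ) : 0 ≤ Real.log m := by
  rcases m with _ | m
  · simp
  · exact Real.log_nonneg (by exact_mod_cast Nat.one_le_iff_ne_zero.2 (Nat.succ_ne_zero m))

lemma log_nat_mono {a b : ℕ} (h : a ≤ b) : Real.log a ≤ Real.log b := by
  rcases Nat.eq_zero_or_pos a with rfl | ha
  · simpa using log_nat_nonneg b
  · exact Real.log_le_log (by exact_mod_cast ha) (by exact_mod_cast h)

/-- Let `X` be a compact metric space and `𝓐` a fixed finite open cover of `X`. Then the map
`g ↦ h(𝓐, g)` is upper semicontinuous on `C(X, X)` (with the compact-open topology, which on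
the compact space `X` is the topology of uniform convergence). -/
theorem upperSemicontinuous_coverEnt {X : Type*} [MetricSpace X] [CompactSpace X]
    (𝓐 : Finset (Set X)) (hopen : ∀ A ∈ 𝓐, IsOpen A) (hcover : ⋃₀ (𝓐 : Set (Set X)) = univ) :
    UpperSemicontinuous (fun g : C(X, X) => coverEnt 𝓐 ⇑g) := by
  have hnonneg : ∀ (g : X → X) (n : ℕ),
      0 ≤ Real.log (coverNum 𝓐 g (n + 1)) / (n + 1) :=
    fun g n => div_nonneg (log_nat_nonneg _) (by positivity)
  have hbdd : ∀ g : X → X, BddBelow (range fun n : ℕ =>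
      Real.log (coverNum 𝓐 g (n + 1)) / (n + 1)) := by
    rintro g
    exact ⟨0, by rintro _ ⟨k, rfl⟩; exact hnonneg g k⟩
  intro g₀ y hy
  simp only [coverEnt] at hy
  obtain ⟨n, hn⟩ := exists_lt_of_ciInf_lt hy
  set m := coverNum 𝓐 (⇑g₀) (n + 1) with hmdef
  have hmem : m ∈ {m : ℕ | ∃ c : Fin m → Fin (n + 1) → Set X, (∀ k i, c k i ∈ 𝓐) ∧
      (⋃ k, ⋂ i : Fin (n + 1), (⇑g₀)^[i.1] ⁻¹' c k i) = Set.univ} :=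
    Nat.sInf_mem (coverSet_nonempty 𝓐 hcover (⇑g₀) (n + 1))
  obtain ⟨c, hc𝓐, hcU⟩ := hmem
  have hcopen : ∀ k i, IsOpen (c k i) := fun k i => hopen _ (hc𝓐 k i)
  have hSopen := isOpen_coverSet (X := X) c hcopen
  have hSmem : g₀ ∈ {g : C(X, X) | (⋃ k, ⋂ i : Fin (n + 1), (⇑g)^[i.1] ⁻¹' c k i) = univ} := hcU
  filter_upwards [hSopen.mem_nhds hSmem] with g hg
  have hle : coverNum 𝓐 (⇑g) (n + 1) ≤ m := Nat.sInf_le ⟨c, hc𝓐, hg⟩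
  calc coverEnt 𝓐 ⇑g ≤ Real.log (coverNum 𝓐 (⇑g) (n + 1)) / (n + 1) :=
        ciInf_le (hbdd ⇑g) n
    _ ≤ Real.log m / (n + 1) := by
        apply div_le_div_of_nonneg_right (log_nat_mono hle); positivity
    _ < y := hn
end
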